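/- arXiv:math/0304019 — 12 statements merged into one kernel-verified Lean document; each statement's English description precedes it below -/
import Mathlib

section
/- Let U ⊆ P(ℕ) be a family closed under finite intersections and under supersets within the Boolean algebra it generates, containing no finite sets, and with no pseudo-intersection. Then there is no infinite A ⊆ ℕ such that every set in U∥A = {B ∩ A : B ∈ U} is infinite and U∥A is linearly quasiordered by ⊆*. -/
open Cardinal Set

/-- `A` is almost contained in `B`: `A \ B` is finite. -/
def ASub (A B : Set ℕ) : Prop := (A \ B).Finite

/-- A family is linearly quasiordered by `⊆*`. -/
def LinQO (F : Set (Set ℕ)) : Prop := ∀ A ∈ F, ∀ B ∈ F, ASub A B ∨ ASub B A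

/-- A centered family of infinite subsets of `ℕ`. -/
def Centered (F : Set (Set ℕ)) : Prop :=
  (∀ A ∈ F, A.Infinite) ∧
  ∀ G : Finset (Set ℕ), ↑G ⊆ F → G.Nonempty → (⋂ A ∈ G, A).Infinite

/-- `A` is a pseudo-intersection of `F`. -/
def PseudoInt (F : Set (Set ℕ)) (A : Set ℕ) : Prop :=
  A.Infinite ∧ ∀ B ∈ F, ASub A B

/-- The pseudo-intersection number 𝔭. -/
noncomputable def pNum : Cardinal :=
  sInf {c | ∃ F : Set (Set ℕ), Centered F ∧ (¬∃ A, PseudoInt F A) ∧ c = #F}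

/-- The tower number 𝔱. -/
noncomputable def tNum : Cardinal :=
  sInf {c | ∃ F : Set (Set ℕ), (∀ A ∈ F, A.Infinite) ∧ LinQO F ∧
    (¬∃ A, PseudoInt F A) ∧ c = #F}

/-- Eventual dominance `f ≤* g`. -/
def LeStar (f g : ℕ → ℕ) : Prop := {n | g n < f n}.Finite

def UnboundedFam (B : Set (ℕ → ℕ)) : Prop := ¬∃ g, ∀ f ∈ B, LeStar f g

def DominatingFam (D : Set (ℕ → ℕ)) : Prop := ∀ f, ∃ g ∈ D, LeStar f g

/-- The unbounding number 𝔟. -/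
noncomputable def bNum : Cardinal := sInf {c | ∃ B, UnboundedFam B ∧ c = #B}

/-- The dominating number 𝔡. -/
noncomputable def dNum : Cardinal := sInf {c | ∃ D, DominatingFam D ∧ c = #D}

def SplittingFam (S : Set (Set ℕ)) : Prop :=
  ∀ A : Set ℕ, A.Infinite → ∃ s ∈ S, (A ∩ s).Infinite ∧ (A \ s).Infinite

/-- The splitting number 𝔰. -/
noncomputable def sNum : Cardinal := sInf {c | ∃ S, SplittingFam S ∧ c = #S}

/-- `g` avoids middles in `X` with respect to `⟨R,S⟩`. -/
def AvoidsMiddles (R S : ℕ → ℕ → Prop) (g : ℕ → ℕ) (X : Set (ℕ → ℕ)) : Prop :=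
  (∀ f ∈ X, {n | R (f n) (g n)}.Infinite) ∧
  ∀ f ∈ X, ∀ h ∈ X,
    {n | R (f n) (g n) ∧ S (g n) (h n)}.Finite ∨
    {n | R (h n) (g n) ∧ S (g n) (f n)}.Finite

/-- The excluded middle property with respect to `⟨R,S⟩`. -/
def EMP (R S : ℕ → ℕ → Prop) (X : Set (ℕ → ℕ)) : Prop := ∃ g, AvoidsMiddles R S g X

/-- The cardinal 𝔵_{R,S}. -/
noncomputable def xNum (R S : ℕ → ℕ → Prop) : Cardinal :=
  sInf {c | ∃ X : Set (ℕ → ℕ), ¬ EMP R S X ∧ c = #X}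

/-- The class 𝔅 of bounded sets. -/
def ClB (Y : Set (ℕ → ℕ)) : Prop := ∃ g, ∀ f ∈ Y, LeStar f g

/-- The class 𝔛. -/
def ClX (Y : Set (ℕ → ℕ)) : Prop := EMP (· < ·) (· ≤ ·) Y

/-- `Y` is finitely dominating: `maxfin Y` is dominating. -/
def FinDominating (Y : Set (ℕ → ℕ)) : Prop :=
  ∀ f : ℕ → ℕ, ∃ F : Finset (ℕ → ℕ), ↑F ⊆ Y ∧ LeStar f (fun n => F.sup (fun h => h n))

/-- The class 𝔇fin of non finitely-dominating sets. -/
def ClDfin (Y : Set (ℕ → ℕ)) : Prop := ¬ FinDominating Y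

/-- The class 𝔇 of non-dominating sets. -/
def ClD (Y : Set (ℕ → ℕ)) : Prop := ¬ DominatingFam Y

/-- The additivity number add(I, J). -/
noncomputable def addNum (I J : Set (ℕ → ℕ) → Prop) : Cardinal :=
  sInf {c | ∃ Fam : Set (Set (ℕ → ℕ)), (∀ Y ∈ Fam, I Y) ∧ ¬ J (⋃₀ Fam) ∧ c = #Fam}

/-- The Boolean subalgebra of `P(ℕ)` generated by `F`. -/
def genBA (F : Set (Set ℕ)) : Set (Set ℕ) :=
  ⋂₀ {C | F ⊆ C ∧ Set.univ ∈ C ∧ (∀ A ∈ C, Aᶜ ∈ C) ∧ ∀ A ∈ C, ∀ B ∈ C, A ∩ B ∈ C}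

/-- A nonprincipal ultrafilter (every member is infinite). -/
def NonPrincipal (U : Ultrafilter ℕ) : Prop := ∀ S ∈ U, Set.Infinite S

/-- The cofinality of the reduced product `ℕ^ℕ/U`. -/
noncomputable def cofRP (U : Ultrafilter ℕ) : Cardinal :=
  sInf {c | ∃ C : Set (ℕ → ℕ), (∀ f : ℕ → ℕ, ∃ g ∈ C, {n | f n ≤ g n} ∈ U) ∧ c = #C}


theorem stmt1 (U : Set (Set ℕ))
    (hinter : ∀ A ∈ U, ∀ B ∈ U, A ∩ B ∈ U)
    (hsup : ∀ A ∈ U, ∀ B ∈ genBA U, A ⊆ B → B ∈ U)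
    (hinf : ∀ A ∈ U, A.Infinite)
    (hnpi : ¬∃ A, PseudoInt U A) :
    ¬∃ A : Set ℕ, A.Infinite ∧ (∀ B ∈ U, (B ∩ A).Infinite) ∧
      LinQO ((· ∩ A) '' U) := by
  have hsubgen : U ⊆ genBA U := by
    intro x hx C hC
    exact hC.1 hx
  have hcompl : ∀ X ∈ genBA U, Xᶜ ∈ genBA U := by
    intro X hX C hC
    exact hC.2.2.1 _ (hX C hC)
  have hintg : ∀ X ∈ genBA U, ∀ Y ∈ genBA U, X ∩ Y ∈ genBA U := by
    intro X hX Y hY C hC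
    exact hC.2.2.2 _ (hX C hC) _ (hY C hC)
  have hunion : ∀ X ∈ genBA U, ∀ Y ∈ genBA U, X ∪ Y ∈ genBA U := by
    intro X hX Y hY
    have : X ∪ Y = (Xᶜ ∩ Yᶜ)ᶜ := by ext x; simp [not_and_or]; tauto
    rw [this]
    exact hcompl _ (hintg _ (hcompl _ hX) _ (hcompl _ hY))
  rintro ⟨A, hA, hBA, hlin⟩
  apply hnpi
  refine ⟨A, hA, ?_⟩
  intro B hB
  by_contra hfin
  have hBAinf := hBA B hB
  obtain ⟨C, hC, hCinf⟩ : ∃ C ∈ U, ¬ ASub (B ∩ A) C := by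
    by_contra h
    push_neg at h
    exact hnpi ⟨B ∩ A, hBAinf, h⟩
  have hDgen : C ∪ Bᶜ ∈ genBA U := hunion _ (hsubgen hC) _ (hcompl _ (hsubgen hB))
  have hD : C ∪ Bᶜ ∈ U := hsup C hC _ hDgen Set.subset_union_left
  have h1 : B ∩ A ∈ (· ∩ A) '' U := ⟨B, hB, rfl⟩
  have h2 : (C ∪ Bᶜ) ∩ A ∈ (· ∩ A) '' U := ⟨_, hD, rfl⟩
  rcases hlin _ h1 _ h2 with h | h
  · apply hCinf
    have heq : (B ∩ A) \ C = (B ∩ A) \ ((C ∪ Bᶜ) ∩ A) := by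
      ext x
      simp only [Set.mem_diff, Set.mem_inter_iff, Set.mem_union, Set.mem_compl_iff]
      tauto
    unfold ASub
    rw [heq]
    exact h
  · apply hfin
    have hsub : A \ B ⊆ ((C ∪ Bᶜ) ∩ A) \ (B ∩ A) := by
      intro x hx
      simp only [Set.mem_diff, Set.mem_inter_iff, Set.mem_union, Set.mem_compl_iff] at *
      tauto
    exact h.subset hsub
end

section
/- The pseudo-intersection number 𝔭 equals 𝔨wt, where 𝔨wt is the minimal cardinality of a centered family F ⊆ [ℕ]^∞ such that there is no infinite A ⊆ ℕ for which all sets in F∥A = {B ∩ A : B ∈ F} are infinite and F∥A is linearly quasiordered by ⊆*. -/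
open Cardinal Set

/-- The cardinal 𝔨wt. -/
noncomputable def kwtNum : Cardinal :=
  sInf {c | ∃ F : Set (Set ℕ), Centered F ∧
    (¬∃ A : Set ℕ, A.Infinite ∧ (∀ B ∈ F, (B ∩ A).Infinite) ∧ LinQO ((· ∩ A) '' F)) ∧
    c = #F}

/-!
Every pseudo-intersection `A` of `F` has a trace `F∥A` consisting of sets `=*` `A`,
so `𝔭 ≤ 𝔨wt`.
Conversely, if `F` is centered without pseudo-intersection, add the implications `Bᶜ ∪ C`
(`B, C ∈ F`). For a candidate `A`, pick `B ∈ F` with `A \ B` infinite and then `C ∈ F` with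
`(B ∩ A) \ C` infinite; the traces of `B` and of `Bᶜ ∪ C` on `A` are then `⊆*`-incomparable.
The enlarged family is still centered and, `F` being infinite, of the same size.
-/

/-- `F∥A` is a `⊆*`-chain of infinite sets. -/
def TraceChain (F : Set (Set ℕ)) (A : Set ℕ) : Prop :=
  A.Infinite ∧ (∀ B ∈ F, (B ∩ A).Infinite) ∧ LinQO ((· ∩ A) '' F)

def implClosure (F : Set (Set ℕ)) : Set (Set ℕ) :=
  F ∪ image2 (fun B C => Bᶜ ∪ C) F F

variable {F G : Set (Set ℕ)} {A : Set ℕ}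

lemma Centered.of_forall_exists_subset (hF : Centered F) (hGF : ∀ E ∈ G, ∃ B ∈ F, B ⊆ E) :
    Centered G := by
  choose! r hrF hrE using hGF
  refine ⟨fun E hE => (hF.1 _ (hrF E hE)).mono (hrE E hE), fun s hs hne => ?_⟩
  have hsF : ↑(s.image r) ⊆ F := by
    rw [Finset.coe_image, image_subset_iff]
    exact fun E hE => hrF E (hs hE)
  refine (hF.2 _ hsF (hne.image r)).mono ?_
  simp only [subset_def, mem_iInter]
  exact fun x hx E hE => hrE E (hs hE) (hx (r E) (Finset.mem_image_of_mem r hE))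

lemma Centered.exists_pseudoInt_of_finite (hF : Centered F) (hfin : F.Finite) :
    ∃ A, PseudoInt F A := by
  rcases F.eq_empty_or_nonempty with rfl | hne
  · exact ⟨univ, infinite_univ, fun B hB => absurd hB (notMem_empty B)⟩
  · refine ⟨⋂ B ∈ hfin.toFinset, B, hF.2 _ (by simp) (by simpa using hne), fun B hB => ?_⟩
    rw [ASub, sdiff_eq_empty.mpr (iInter₂_subset B (hfin.mem_toFinset.mpr hB))]
    exact finite_empty

lemma exists_infinite_diff_of_not_pseudoInt (hF : ¬∃ A, PseudoInt F A) (hA : A.Infinite) :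
    ∃ B ∈ F, (A \ B).Infinite := by
  by_contra! h
  exact hF ⟨A, hA, h⟩

lemma PseudoInt.traceChain (hA : PseudoInt F A) : TraceChain F A := by
  refine ⟨hA.1, fun B hB => ?_, ?_⟩
  · simpa [inter_comm] using hA.1.sdiff (hA.2 B hB)
  · rintro _ ⟨B, -, rfl⟩ _ ⟨C, hC, rfl⟩
    exact Or.inl ((hA.2 C hC).subset fun x hx => ⟨hx.1.2, fun hxC => hx.2 ⟨hxC, hx.1.2⟩⟩)

lemma Centered.implClosure (hF : Centered F) : Centered (implClosure F) :=
  hF.of_forall_exists_subset <| by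
    rintro E (hE | ⟨B, -, C, hC, rfl⟩)
    · exact ⟨E, hE, subset_rfl⟩
    · exact ⟨C, hC, subset_union_right⟩

lemma mk_implClosure_le (hF : F.Infinite) : #(implClosure F) ≤ #F := by
  have h : ℵ₀ ≤ #F := infinite_iff.mp hF.to_subtype
  calc #(implClosure F) ≤ #F + #F * #F :=
        (mk_union_le _ _).trans (add_le_add_right mk_image2_le _)
    _ = #F := by rw [mul_eq_self h, add_eq_self h]

lemma not_traceChain_implClosure (hF : ¬∃ A, PseudoInt F A) :
    ¬TraceChain (implClosure F) A := by
  rintro ⟨hA, htrace, hchain⟩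
  obtain ⟨B, hB, hAB⟩ := exists_infinite_diff_of_not_pseudoInt hF hA
  have hB' : B ∈ implClosure F := subset_union_left hB
  obtain ⟨C, hC, hBAC⟩ := exists_infinite_diff_of_not_pseudoInt hF (htrace B hB')
  have hBC : Bᶜ ∪ C ∈ implClosure F := subset_union_right (mem_image2_of_mem hB hC)
  rcases hchain _ (mem_image_of_mem _ hBC) _ (mem_image_of_mem _ hB') with h | h
  · exact hAB (h.subset fun x hx => ⟨⟨Or.inl hx.2, hx.1⟩, fun h => hx.2 h.1⟩)
  · exact hBAC (h.subset fun x hx => ⟨hx.1, fun h => h.1.elim (· hx.1.1) hx.2⟩)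

theorem stmt2 : pNum = kwtNum := by
  refine csInf_eq_csInf_of_forall_exists_le ?_ ?_
  · rintro _ ⟨F, hF, hnp, rfl⟩
    have hinf : F.Infinite := fun hfin => hnp (hF.exists_pseudoInt_of_finite hfin)
    exact ⟨_, ⟨implClosure F, hF.implClosure, fun ⟨_, hA⟩ =>
      not_traceChain_implClosure hnp hA, rfl⟩, mk_implClosure_le hinf⟩
  · rintro _ ⟨F, hF, hno, rfl⟩
    exact ⟨_, ⟨F, hF, fun ⟨A, hA⟩ => hno ⟨A, hA.traceChain⟩, rfl⟩, le_rfl⟩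
end

section
/- 𝔭 = min{𝔭*, 𝔱}, where 𝔭* is the minimal size of a centered family in [ℕ]^∞ which is not linearly refinable. -/
open Cardinal Set

/-- `Y` is linearly refinable. -/
def LinRefinable (Y : Set (Set ℕ)) : Prop :=
  ∃ r : Set ℕ → Set ℕ, (∀ y ∈ Y, r y ⊆ y ∧ (r y).Infinite) ∧ LinQO (r '' Y)

/-- The cardinal 𝔭*. -/
noncomputable def pStarNum : Cardinal :=
  sInf {c | ∃ F : Set (Set ℕ), Centered F ∧ ¬ LinRefinable F ∧ c = #F}

/-!
Towers are centered, and a centered family with a pseudo-intersection `A` is linearly refined by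
`y ↦ A ∩ y`; hence `𝔭 ≤ 𝔱` and `𝔭 ≤ 𝔭*`. Conversely, a linear refinement of a centered
family without pseudo-intersection is a tower without pseudo-intersection and of no larger
size, so `min 𝔭* 𝔱 ≤ 𝔭`.

As `sInf ∅ = 0` for cardinals, `𝔭 ≤ 𝔱` and `𝔭 ≤ 𝔭*` also need witnesses. A maximal tower (Zorn)
has no pseudo-intersection. An ultrafilter `U` that tends to infinity along the columns of
`ℕ ≅ ℕ × ℕ` but meets some column infinitely in each member (a non-P-point) is not linearly
refinable: a linear refinement `r` maps `U` into itself, which makes the countably many sets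
`r (columns ≥ k)` coinitial in `U` modulo finite sets; but some set splits all of them, and
neither it nor its complement can then belong to `U`.
-/

open Filter

namespace ASub

variable {A B C : Set ℕ}

lemma refl (A : Set ℕ) : ASub A A := by simp [ASub]

lemma of_subset (h : A ⊆ B) : ASub A B := by simp [ASub, sdiff_eq_empty.2 h]

lemma trans (hAB : ASub A B) (hBC : ASub B C) : ASub A C := by
  refine (hAB.union hBC).subset fun x ⟨hA, hC⟩ => ?_
  by_cases hB : x ∈ B
  · exact Or.inr ⟨hB, hC⟩
  · exact Or.inl ⟨hA, hB⟩

lemma infinite_inter (h : ASub A B) (hA : A.Infinite) : (A ∩ B).Infinite := by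
  simpa [sdiff_sdiff_right_self] using hA.sdiff h

lemma not_of_disjoint (h : Disjoint A B) (hA : A.Infinite) : ¬ ASub A B := fun hAB => by
  simpa [h.inter_eq] using hAB.infinite_inter hA

end ASub

section LinQO

variable {F : Set (Set ℕ)}

lemma LinQO.insert {A : Set ℕ} (hF : LinQO F) (hA : ∀ B ∈ F, ASub A B) :
    LinQO (insert A F) := by
  rintro _ (rfl | hB) _ (rfl | hC)
  · exact Or.inl (ASub.refl _)
  · exact Or.inl (hA _ hC)
  · exact Or.inr (hA _ hB)
  · exact hF _ hB _ hC

lemma LinQO.exists_asub_forall (hF : LinQO F) {G : Finset (Set ℕ)} (hGF : ↑G ⊆ F)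
    (hG : G.Nonempty) : ∃ A ∈ G, ∀ B ∈ G, ASub A B := by
  induction hG using Finset.Nonempty.cons_induction with
  | singleton a => exact ⟨a, by simp, by simp [ASub.refl]⟩
  | cons a s _ _ ih =>
    rw [Finset.coe_cons, insert_subset_iff] at hGF
    obtain ⟨A, hAs, hA⟩ := ih hGF.2
    simp only [Finset.mem_cons, exists_eq_or_imp, forall_eq_or_imp]
    rcases hF a hGF.1 A (hGF.2 hAs) with h | h
    · exact Or.inl ⟨ASub.refl a, fun B hB => h.trans (hA B hB)⟩
    · exact Or.inr ⟨A, hAs, h, hA⟩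

lemma LinQO.centered (hF : LinQO F) (hinf : ∀ A ∈ F, A.Infinite) : Centered F := by
  refine ⟨hinf, fun G hGF hG => ?_⟩
  obtain ⟨A, hAG, hA⟩ := hF.exists_asub_forall hGF hG
  have hAG' : ASub A (⋂ B ∈ G, B) := by
    simp only [ASub, sdiff_iInter]
    exact G.finite_toSet.biUnion hA
  exact (hAG'.infinite_inter (hinf A (hGF hAG))).mono inter_subset_right

end LinQO

lemma PseudoInt.linRefinable {F : Set (Set ℕ)} {A : Set ℕ} (hA : PseudoInt F A) :
    LinRefinable F := by
  refine ⟨fun y => A ∩ y,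
    fun y hy => ⟨inter_subset_right, (hA.2 y hy).infinite_inter hA.1⟩, ?_⟩
  rintro _ ⟨y, -, rfl⟩ _ ⟨w, hw, rfl⟩
  exact Or.inl <| (hA.2 w hw).subset fun x hx => ⟨hx.1.1, fun h => hx.2 ⟨hx.1.1, h⟩⟩

lemma PseudoInt.of_image {F : Set (Set ℕ)} {r : Set ℕ → Set ℕ} (hr : ∀ y ∈ F, r y ⊆ y)
    {A : Set ℕ} (hA : PseudoInt (r '' F) A) : PseudoInt F A :=
  ⟨hA.1, fun y hy => (hA.2 _ ⟨y, hy, rfl⟩).trans (ASub.of_subset (hr y hy))⟩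

lemma exists_splitting_set (u : ℕ → Set ℕ) (hu : ∀ k, (u k).Infinite) :
    ∃ D : Set ℕ, ∀ k, (u k ∩ D).Infinite ∧ (u k \ D).Infinite := by
  -- `φ` is injective with `φ (pair k m) ∈ u k`; `D` takes the points with `m` even.
  obtain ⟨φ, hφ, hφu⟩ := extraction_forall_of_frequently
    (P := fun n x => x ∈ u n.unpair.1) fun n => Nat.frequently_atTop_iff_infinite.2 (hu _)
  refine ⟨φ '' {n | Even n.unpair.2}, fun k => ⟨?_, ?_⟩⟩
  · refine infinite_of_injective_forall_mem (f := fun m => φ (Nat.pair k (2 * m)))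
      (fun m m' h => by simpa using hφ.injective h) fun m =>
        ⟨by simpa using hφu (Nat.pair k (2 * m)), _, by simp, rfl⟩
  · refine infinite_of_injective_forall_mem (f := fun m => φ (Nat.pair k (2 * m + 1)))
      (fun m m' h => by simpa using hφ.injective h) fun m =>
        ⟨by simpa using hφu (Nat.pair k (2 * m + 1)), ?_⟩
    rintro ⟨n, hn, hφn⟩
    rw [hφ.injective hφn] at hn
    simp at hn

lemma exists_tower :
    ∃ F : Set (Set ℕ), (∀ A ∈ F, A.Infinite) ∧ LinQO F ∧ ¬∃ A, PseudoInt F A := by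
  obtain ⟨M, hM⟩ := zorn_subset {F : Set (Set ℕ) | (∀ A ∈ F, A.Infinite) ∧ LinQO F}
    fun c hc hchain => by
      refine ⟨⋃₀ c, ⟨fun A ⟨F, hF, hA⟩ => (hc hF).1 A hA, ?_⟩,
        fun _ => subset_sUnion_of_mem⟩
      rintro A ⟨F, hF, hA⟩ B ⟨F', hF', hB⟩
      rcases hchain.total hF hF' with h | h
      · exact (hc hF').2 A (h hA) B hB
      · exact (hc hF).2 A hA B (h hB)
  refine ⟨M, hM.prop.1, hM.prop.2, ?_⟩
  rintro ⟨A, hAinf, hAM⟩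
  obtain ⟨D, hD⟩ := exists_splitting_set (fun _ => A) fun _ => hAinf
  have hmem : A ∩ D ∈ M := hM.mem_of_prop_insert
    ⟨fun B hB => hB.elim (· ▸ (hD 0).1) (hM.prop.1 B),
      hM.prop.2.insert fun B hB => (ASub.of_subset inter_subset_left).trans (hAM B hB)⟩
  exact (hD 0).2 (by simpa [ASub, sdiff_self_inter] using hAM _ hmem)

namespace Ultrafilter

variable (U : Ultrafilter ℕ)

lemma centered_of_forall_infinite (hU : ∀ X ∈ U, X.Infinite) : Centered {X | X ∈ U} :=
  ⟨hU, fun G hG _ => hU _ ((biInter_finset_mem G).2 fun _ hA => hG hA)⟩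

lemma mem_of_linQO_image {r : Set ℕ → Set ℕ} (hr : ∀ X ∈ U, r X ⊆ X ∧ (r X).Infinite)
    (hlin : LinQO (r '' {X | X ∈ U})) {X : Set ℕ} (hX : X ∈ U) : r X ∈ U := by
  by_contra hrX
  have hXc : (r X)ᶜ ∈ U := compl_mem_iff_notMem.2 hrX
  have hdisj : Disjoint (r (r X)ᶜ) (r X) := disjoint_compl_left.mono_left (hr _ hXc).1
  rcases hlin _ ⟨_, hXc, rfl⟩ _ ⟨X, hX, rfl⟩ with h | h
  · exact ASub.not_of_disjoint hdisj (hr _ hXc).2 h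
  · exact ASub.not_of_disjoint hdisj.symm (hr X hX).2 h

theorem not_linRefinable (p : ℕ → ℕ) (hp : Tendsto p U atTop)
    (hfib : ∀ X ∈ U, ∃ n, (X ∩ p ⁻¹' {n}).Infinite) : ¬ LinRefinable {X | X ∈ U} := by
  rintro ⟨r, hr, hlin⟩
  have htail (k : ℕ) : p ⁻¹' Ici k ∈ U := hp (Ici_mem_atTop k)
  set t : ℕ → Set ℕ := fun k => r (p ⁻¹' Ici k)
  have hcoinitial : ∀ X ∈ U, ∃ k, ASub (t k) X := by
    intro X hX
    obtain ⟨n, hn⟩ := hfib _ (U.mem_of_linQO_image hr hlin hX)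
    have hnot : ¬ ASub (r X) (t (n + 1)) := fun h => hn <| h.subset fun x ⟨hxr, hxn⟩ =>
      ⟨hxr, fun hxt => by simpa [show p x = n from hxn] using (hr _ (htail (n + 1))).1 hxt⟩
    rcases hlin _ ⟨X, hX, rfl⟩ _ ⟨_, htail (n + 1), rfl⟩ with h | h
    · exact absurd h hnot
    · exact ⟨n + 1, h.trans (ASub.of_subset (hr X hX).1)⟩
  obtain ⟨D, hD⟩ := exists_splitting_set t fun k => (hr _ (htail k)).2
  rcases U.mem_or_compl_mem D with hDU | hDU
  · obtain ⟨k, hk⟩ := hcoinitial D hDU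
    exact (hD k).2 hk
  · obtain ⟨k, hk⟩ := hcoinitial _ hDU
    exact (hD k).1 (by simpa [ASub, sdiff_compl] using hk)

end Ultrafilter

theorem exists_ultrafilter_tendsto_of_infinite_fibers {α : Type*} (p : α → ℕ)
    (hp : ∀ n, (p ⁻¹' {n}).Infinite) :
    ∃ U : Ultrafilter α, Tendsto p U atTop ∧
      ∀ X ∈ U, ∃ n, (X ∩ p ⁻¹' {n}).Infinite := by
  let coSmall : Filter α := comk (fun X => ∀ n, (X ∩ p ⁻¹' {n}).Finite) (by simp)
    (fun _ ht _ hst n => (ht n).subset (inter_subset_inter_left _ hst))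
    (fun _ hs _ ht n => by rw [union_inter_distrib_right]; exact (hs n).union (ht n))
  have : (comap p atTop ⊓ coSmall).NeBot := by
    refine inf_neBot_iff.2 fun s ⟨V, hV, hVs⟩ s' hs' => ?_
    obtain ⟨k, hk⟩ := mem_atTop_sets.1 hV
    obtain ⟨x, ⟨hxk, hxs'⟩⟩ := ((hp k).sdiff (hs' k)).nonempty
    exact ⟨x, hVs (hk _ (le_of_eq hxk.symm)), by_contra fun h => hxs' ⟨h, hxk⟩⟩
  refine ⟨.of (comap p atTop ⊓ coSmall),
    tendsto_iff_comap.2 ((Ultrafilter.of_le _).trans inf_le_left), fun X hX => ?_⟩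
  by_contra! hfin
  have hXc : Xᶜ ∈ Ultrafilter.of (comap p atTop ⊓ coSmall) :=
    Ultrafilter.of_le _ (mem_inf_of_right (by simpa [coSmall] using hfin))
  exact Ultrafilter.compl_notMem_iff.2 hX hXc

theorem exists_centered_not_linRefinable :
    ∃ F : Set (Set ℕ), Centered F ∧ ¬ LinRefinable F := by
  obtain ⟨U, hp, hfib⟩ := exists_ultrafilter_tendsto_of_infinite_fibers
    (fun m : ℕ => m.unpair.1) fun n => infinite_of_injective_forall_mem (f := Nat.pair n)
      (fun _ _ h => (Nat.pair_eq_pair.1 h).2) fun k => by simp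
  exact ⟨_, U.centered_of_forall_infinite fun X hX =>
    (hfib X hX).elim fun _ hn => hn.mono inter_subset_left, U.not_linRefinable _ hp hfib⟩

lemma tNum_le_mk {F : Set (Set ℕ)} (hinf : ∀ A ∈ F, A.Infinite) (hlin : LinQO F)
    (hnpi : ¬∃ A, PseudoInt F A) : tNum ≤ #F :=
  csInf_le' ⟨F, hinf, hlin, hnpi, rfl⟩

lemma pStarNum_le_mk {F : Set (Set ℕ)} (hcen : Centered F) (hnref : ¬ LinRefinable F) :
    pStarNum ≤ #F :=
  csInf_le' ⟨F, hcen, hnref, rfl⟩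

theorem pNum_le_tNum : pNum ≤ tNum := by
  obtain ⟨F, hinf, hlin, hnpi⟩ := exists_tower
  refine csInf_le_csInf (OrderBot.bddBelow _) ⟨#F, F, hinf, hlin, hnpi, rfl⟩ ?_
  rintro _ ⟨F, hinf, hlin, hnpi, rfl⟩
  exact ⟨F, hlin.centered hinf, hnpi, rfl⟩

theorem pNum_le_pStarNum : pNum ≤ pStarNum := by
  obtain ⟨F, hcen, hnref⟩ := exists_centered_not_linRefinable
  refine csInf_le_csInf (OrderBot.bddBelow _) ⟨#F, F, hcen, hnref, rfl⟩ ?_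
  rintro _ ⟨F, hcen, hnref, rfl⟩
  exact ⟨F, hcen, fun ⟨_, hA⟩ => hnref hA.linRefinable, rfl⟩

theorem min_pStarNum_tNum_le_pNum : min pStarNum tNum ≤ pNum := by
  obtain ⟨F, hinf, hlin, hnpi⟩ := exists_tower
  refine le_csInf ⟨#F, F, hlin.centered hinf, hnpi, rfl⟩ ?_
  rintro _ ⟨F, hcen, hnpi, rfl⟩
  by_cases href : LinRefinable F
  · obtain ⟨r, hr, hlin⟩ := href
    have htower : tNum ≤ #(r '' F) := tNum_le_mk (forall_mem_image.2 fun y hy => (hr y hy).2)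
      hlin fun ⟨A, hA⟩ => hnpi ⟨A, hA.of_image fun y hy => (hr y hy).1⟩
    exact (min_le_right _ _).trans (htower.trans mk_image_le)
  · exact (min_le_left _ _).trans (pStarNum_le_mk hcen href)

theorem stmt3 : pNum = min pStarNum tNum :=
  le_antisymm (le_min pNum_le_pStarNum pNum_le_tNum) min_pStarNum_tNum_le_pNum
end

section
/- For binary relations R, S ∈ {<, ≤} on ℕ: 𝔟 ≤ 𝔵_{≤,≤} ≤ 𝔵_{≤,<} ≤ 𝔵_{<,≤} ≤ 𝔵_{<,<} ≤ 𝔡. -/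
open Cardinal Set

section Aux

lemma evens_infinite : {n : ℕ | n % 2 = 0}.Infinite := by
  refine Set.infinite_of_injective_forall_mem (f := fun k : ℕ => 2 * k) ?_ ?_
  · intro a b h; simp only [] at h; omega
  · intro k; simp [Nat.mul_mod_right]

lemma odds_infinite : {n : ℕ | n % 2 = 1}.Infinite := by
  refine Set.infinite_of_injective_forall_mem (f := fun k : ℕ => 2 * k + 1) ?_ ?_
  · intro a b h; simp only [] at h; omega
  · intro k; simp only [Set.mem_setOf_eq]; omega

lemma emp_of_bounded (X : Set (ℕ → ℕ)) (h : ∃ g, ∀ f ∈ X, LeStar f g) :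
    EMP (· ≤ ·) (· ≤ ·) X := by
  obtain ⟨g, hg⟩ := h
  refine ⟨fun n => g n + 1, ?_, ?_⟩
  · intro f hf
    refine ((hg f hf).infinite_compl).mono ?_
    intro n hn
    simp only [Set.mem_compl_iff, Set.mem_setOf_eq, not_lt] at hn
    simp only [Set.mem_setOf_eq]
    omega
  · intro f _ h hh
    left
    refine ((hg h hh).subset ?_)
    intro n hn
    simp only [Set.mem_setOf_eq] at hn ⊢
    omega

lemma emp_step1 (X : Set (ℕ → ℕ)) (h : EMP (· ≤ ·) (· ≤ ·) X) :
    EMP (· ≤ ·) (· < ·) X := by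
  obtain ⟨g, h1, h2⟩ := h
  refine ⟨g, h1, ?_⟩
  intro f hf h hh
  rcases h2 f hf h hh with hfin | hfin
  · left; exact hfin.subset fun n hn => ⟨hn.1, le_of_lt hn.2⟩
  · right; exact hfin.subset fun n hn => ⟨hn.1, le_of_lt hn.2⟩

lemma emp_step2 (X : Set (ℕ → ℕ)) (h : EMP (· ≤ ·) (· < ·) X) :
    EMP (· < ·) (· ≤ ·) X := by
  obtain ⟨g, h1, h2⟩ := h
  refine ⟨fun n => g n + 1, ?_, ?_⟩
  · intro f hf
    have : {n | f n ≤ g n} = {n | f n < g n + 1} := by ext n; simp [Nat.lt_succ_iff]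
    exact this ▸ h1 f hf
  · intro f hf h hh
    have e : ∀ f h : ℕ → ℕ, {n | f n < g n + 1 ∧ g n + 1 ≤ h n} = {n | f n ≤ g n ∧ g n < h n} := by
      intro f h; ext n; simp only [Set.mem_setOf_eq]; omega
    rcases h2 f hf h hh with hfin | hfin
    · left; exact (e f h) ▸ hfin
    · right; exact (e h f) ▸ hfin

lemma emp_step3 (X : Set (ℕ → ℕ)) (h : EMP (· < ·) (· ≤ ·) X) :
    EMP (· < ·) (· < ·) X := by
  obtain ⟨g, h1, h2⟩ := h
  refine ⟨g, h1, ?_⟩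
  intro f hf h hh
  rcases h2 f hf h hh with hfin | hfin
  · left; exact hfin.subset fun n hn => ⟨hn.1, le_of_lt hn.2⟩
  · right; exact hfin.subset fun n hn => ⟨hn.1, le_of_lt hn.2⟩

lemma not_emp_dom (D : Set (ℕ → ℕ)) (hD : DominatingFam D) :
    ¬ EMP (· < ·) (· < ·) D := by
  rintro ⟨g, h1, _⟩
  obtain ⟨f, hf, hle⟩ := hD (fun n => g n + 1)
  refine (h1 f hf) (hle.subset ?_)
  intro n hn
  simp only [Set.mem_setOf_eq] at hn ⊢
  omega

lemma not_emp_univ_lele : ¬ EMP (· ≤ ·) (· ≤ ·) (Set.univ : Set (ℕ → ℕ)) := by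
  rintro ⟨g, _, h2⟩
  have e : {n | g n ≤ g n ∧ g n ≤ g n} = Set.univ := by ext n; simp
  rcases h2 g (Set.mem_univ g) g (Set.mem_univ g) with h | h <;>
    exact Set.infinite_univ (e ▸ h)

lemma not_emp_univ_lelt : ¬ EMP (· ≤ ·) (· < ·) (Set.univ : Set (ℕ → ℕ)) := by
  rintro ⟨g, _, h2⟩
  set f : ℕ → ℕ := fun n => g n + n % 2 with hf
  set h : ℕ → ℕ := fun n => g n + (n + 1) % 2 with hh
  rcases h2 f (Set.mem_univ f) h (Set.mem_univ h) with hfin | hfin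
  · refine (evens_infinite.mono ?_) hfin
    intro n hn
    simp only [Set.mem_setOf_eq, hf, hh] at hn ⊢
    omega
  · refine (odds_infinite.mono ?_) hfin
    intro n hn
    simp only [Set.mem_setOf_eq, hf, hh] at hn ⊢
    omega

lemma not_emp_univ_lt (S : ℕ → ℕ → Prop) : ¬ EMP (· < ·) S (Set.univ : Set (ℕ → ℕ)) := by
  rintro ⟨g, h1, _⟩
  have := h1 g (Set.mem_univ g)
  have e : {n | g n < g n} = (∅ : Set ℕ) := by ext n; simp
  rw [e] at this
  exact this Set.finite_empty

lemma dom_univ : DominatingFam (Set.univ : Set (ℕ → ℕ)) := by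
  intro f
  refine ⟨f, Set.mem_univ f, ?_⟩
  have e : {n | f n < f n} = (∅ : Set ℕ) := by ext n; simp
  rw [LeStar, e]
  exact Set.finite_empty

lemma xNum_le_xNum {R S R' S' : ℕ → ℕ → Prop}
    (hne : {c | ∃ X : Set (ℕ → ℕ), ¬ EMP R' S' X ∧ c = #X}.Nonempty)
    (h : ∀ X, EMP R S X → EMP R' S' X) : xNum R S ≤ xNum R' S' := by
  refine le_csInf hne ?_
  rintro c ⟨X, hX, rfl⟩
  exact csInf_le' ⟨X, fun e => hX (h X e), rfl⟩

end Aux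

theorem stmt4 :
    bNum ≤ xNum (· ≤ ·) (· ≤ ·) ∧
    xNum (· ≤ ·) (· ≤ ·) ≤ xNum (· ≤ ·) (· < ·) ∧
    xNum (· ≤ ·) (· < ·) ≤ xNum (· < ·) (· ≤ ·) ∧
    xNum (· < ·) (· ≤ ·) ≤ xNum (· < ·) (· < ·) ∧
    xNum (· < ·) (· < ·) ≤ dNum := by
  refine ⟨?_, ?_, ?_, ?_, ?_⟩
  · refine le_csInf ⟨#(Set.univ : Set (ℕ → ℕ)), Set.univ, not_emp_univ_lele, rfl⟩ ?_
    rintro c ⟨X, hX, rfl⟩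
    refine csInf_le' ⟨X, ?_, rfl⟩
    intro hb
    exact hX (emp_of_bounded X hb)
  · exact xNum_le_xNum ⟨#(Set.univ : Set (ℕ → ℕ)), Set.univ, not_emp_univ_lelt, rfl⟩ emp_step1
  · exact xNum_le_xNum ⟨#(Set.univ : Set (ℕ → ℕ)), Set.univ, not_emp_univ_lt _, rfl⟩ emp_step2
  · exact xNum_le_xNum ⟨#(Set.univ : Set (ℕ → ℕ)), Set.univ, not_emp_univ_lt _, rfl⟩ emp_step3
  · refine le_csInf ⟨#(Set.univ : Set (ℕ → ℕ)), Set.univ, dom_univ, rfl⟩ ?_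
    rintro c ⟨D, hD, rfl⟩
    exact csInf_le' ⟨D, not_emp_dom D hD, rfl⟩
end

section
/- 𝔰 ≤ 𝔵_{<,≤}: every subset Y of ℕ^ℕ with |Y| < 𝔰 satisfies the excluded middle property with respect to ⟨<,≤⟩. -/
open Cardinal Set

/-! ### Auxiliary machinery for `stmt7` -/

section Stmt7Aux

open scoped Classical

/-- A fast-growing function dominating `f` on initial segments. -/
def Ffun (f : ℕ → ℕ) (m : ℕ) : ℕ := m + 1 + (Finset.range (m + 1)).sup f

/-- Iterates of `Ffun f` starting at `0`, giving an interval partition. -/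
def aSeq (f : ℕ → ℕ) (i : ℕ) : ℕ := (Ffun f)^[i] 0

lemma aSeq_zero (f : ℕ → ℕ) : aSeq f 0 = 0 := rfl

lemma aSeq_succ (f : ℕ → ℕ) (i : ℕ) : aSeq f (i + 1) = Ffun f (aSeq f i) :=
  Function.iterate_succ_apply' _ _ _

lemma aSeq_strictMono (f : ℕ → ℕ) : StrictMono (aSeq f) := by
  apply strictMono_nat_of_lt_succ
  intro i
  rw [aSeq_succ]
  unfold Ffun
  omega

lemma self_le_aSeq (f : ℕ → ℕ) (i : ℕ) : i ≤ aSeq f i :=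
  (aSeq_strictMono f).le_apply

/-- The index of the interval `[aSeq f i, aSeq f (i+1))` containing `m`. -/
def idxf (f : ℕ → ℕ) (m : ℕ) : ℕ := Nat.findGreatest (fun i => aSeq f i ≤ m) m

lemma aSeq_idxf_le (f : ℕ → ℕ) (m : ℕ) : aSeq f (idxf f m) ≤ m :=
  Nat.findGreatest_spec (P := fun i => aSeq f i ≤ m) (Nat.zero_le m)
    (show aSeq f 0 ≤ m from Nat.zero_le m)

lemma lt_aSeq_idxf_succ (f : ℕ → ℕ) (m : ℕ) : m < aSeq f (idxf f m + 1) := by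
  by_contra h
  push_neg at h
  exact Nat.findGreatest_is_greatest (P := fun i => aSeq f i ≤ m)
    (Nat.lt_succ_self _) (le_trans (self_le_aSeq f _) h) h

lemma idxf_mono (f : ℕ → ℕ) {x y : ℕ} (h : x ≤ y) : idxf f x ≤ idxf f y :=
  Nat.le_findGreatest
    (le_trans (le_trans (self_le_aSeq f _) (aSeq_idxf_le f x)) h)
    (le_trans (aSeq_idxf_le f x) h)

lemma key_lt (f : ℕ → ℕ) {x y : ℕ} (hxy : idxf f x + 2 ≤ idxf f y) : f x < y := by
  have h1 : x < aSeq f (idxf f x + 1) := lt_aSeq_idxf_succ f x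
  have h2 : f x < aSeq f (idxf f x + 2) := by
    rw [show idxf f x + 2 = (idxf f x + 1) + 1 from rfl, aSeq_succ]
    have hsup : f x ≤ (Finset.range (aSeq f (idxf f x + 1) + 1)).sup f :=
      Finset.le_sup (Finset.mem_range.2 (by omega))
    unfold Ffun
    omega
  calc f x < aSeq f (idxf f x + 2) := h2
    _ ≤ aSeq f (idxf f y) := (aSeq_strictMono f).monotone hxy
    _ ≤ y := aSeq_idxf_le f y

/-- Elements whose interval index is even. -/
def Uset (f : ℕ → ℕ) : Set ℕ := {m | Even (idxf f m)}

/-- Where `f ≤ h`. -/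
def Tset (f h : ℕ → ℕ) : Set ℕ := {m | f m ≤ h m}

/-- The candidate witness `g` built from an infinite set `X`: on `X` it jumps to the
next element of `X`, elsewhere it is `0`. -/
noncomputable def gOf (X : Set ℕ) : ℕ → ℕ := fun n =>
  if n ∈ X then Nat.nth (· ∈ X) (Nat.count (· ∈ X) n + 1) else 0

lemma mem_of_lt_gOf {X : Set ℕ} {a : ℕ → ℕ} {n : ℕ} (h : a n < gOf X n) : n ∈ X := by
  by_contra hn
  unfold gOf at h
  rw [if_neg hn] at h
  omega

lemma cond1 (f : ℕ → ℕ) (X : Set ℕ) (hX : X.Infinite)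
    (hu : (X ∩ Uset f).Finite ∨ (X \ Uset f).Finite) :
    {n | f n < gOf X n}.Infinite := by
  have hp : (setOf (· ∈ X)).Infinite := hX
  set x : ℕ → ℕ := Nat.nth (· ∈ X) with hxdef
  -- a parity threshold
  obtain ⟨N, hN⟩ : ∃ N, ∀ a ∈ X, N ≤ a → ∀ b ∈ X, N ≤ b →
      (Even (idxf f a) ↔ Even (idxf f b)) := by
    rcases hu with h | h
    · obtain ⟨N, hNb⟩ := h.bddAbove
      refine ⟨N + 1, fun a ha ha' b hb hb' => ?_⟩
      have hA : a ∉ Uset f := fun hU => by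
        have := hNb (show a ∈ X ∩ Uset f from ⟨ha, hU⟩); omega
      have hB : b ∉ Uset f := fun hU => by
        have := hNb (show b ∈ X ∩ Uset f from ⟨hb, hU⟩); omega
      exact iff_of_false hA hB
    · obtain ⟨N, hNb⟩ := h.bddAbove
      refine ⟨N + 1, fun a ha ha' b hb hb' => ?_⟩
      have hA : a ∈ Uset f := by
        by_contra hU
        have := hNb (show a ∈ X \ Uset f from ⟨ha, hU⟩); omega
      have hB : b ∈ Uset f := by
        by_contra hU
        have := hNb (show b ∈ X \ Uset f from ⟨hb, hU⟩); omega
      exact iff_of_true hA hB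
  -- infinitely many indices where the interval index jumps
  have hK : {k | idxf f (x k) ≠ idxf f (x (k + 1))}.Infinite := by
    by_contra hfin
    rw [Set.not_infinite] at hfin
    obtain ⟨K, hKb⟩ := hfin.bddAbove
    have hconst : ∀ k, idxf f (x (K + 1 + k)) = idxf f (x (K + 1)) := by
      intro k
      induction k with
      | zero => rfl
      | succ k ih =>
        have hk : idxf f (x (K + 1 + k)) = idxf f (x (K + 1 + k + 1)) := by
          by_contra hne
          have := hKb (show K + 1 + k ∈ {k | idxf f (x k) ≠ idxf f (x (k + 1))} from hne)
          omega
        rw [show K + 1 + (k + 1) = K + 1 + k + 1 from rfl, ← hk, ih]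
    have hbound : ∀ k, x (K + 1 + k) < aSeq f (idxf f (x (K + 1)) + 1) := by
      intro k
      have h1 := lt_aSeq_idxf_succ f (x (K + 1 + k))
      rw [hconst k] at h1
      exact h1
    have hxk : ∀ k, k ≤ x k := fun k => (Nat.nth_strictMono hp).le_apply
    have h1 := hbound (aSeq f (idxf f (x (K + 1)) + 1))
    have h2 := hxk (K + 1 + aSeq f (idxf f (x (K + 1)) + 1))
    omega
  -- drop small indices
  have hK' : ({k | idxf f (x k) ≠ idxf f (x (k + 1))} \ Set.Iio N).Infinite :=
    hK.diff (Set.finite_Iio N)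
  have hsub : x '' ({k | idxf f (x k) ≠ idxf f (x (k + 1))} \ Set.Iio N) ⊆
      {n | f n < gOf X n} := by
    rintro n ⟨k, ⟨hne, hNk⟩, rfl⟩
    simp only [Set.mem_Iio, not_lt] at hNk
    have hxk : x k ∈ X := Nat.nth_mem_of_infinite hp k
    have hxk1 : x (k + 1) ∈ X := Nat.nth_mem_of_infinite hp (k + 1)
    have hlt : x k < x (k + 1) := (Nat.nth_lt_nth hp).2 (Nat.lt_succ_self k)
    have hNx : N ≤ x k := le_trans hNk ((Nat.nth_strictMono hp).le_apply)
    have hNx1 : N ≤ x (k + 1) := le_trans hNx hlt.le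
    have hpar := hN (x k) hxk hNx (x (k + 1)) hxk1 hNx1
    have hmono : idxf f (x k) ≤ idxf f (x (k + 1)) := idxf_mono f hlt.le
    have h2 : idxf f (x k) + 2 ≤ idxf f (x (k + 1)) := by
      have hne' : idxf f (x k) ≠ idxf f (x (k + 1)) := hne
      have hmono' : idxf f (x k) ≤ idxf f (x (k + 1)) := hmono
      have hmod : idxf f (x k) % 2 = idxf f (x (k + 1)) % 2 := by
        by_cases he : Even (idxf f (x k))
        · have h' := hpar.1 he
          rw [Nat.even_iff] at he h'
          omega
        · have h' : ¬ Even (idxf f (x (k + 1))) := fun hE => he (hpar.2 hE)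
          rw [Nat.even_iff] at he h'
          omega
      omega
    have hflt : f (x k) < x (k + 1) := key_lt f h2
    have hg : gOf X (x k) = x (k + 1) := by
      unfold gOf
      rw [if_pos hxk, Nat.count_nth_of_infinite hp k]
    exact Set.mem_setOf.2 (by rw [hg]; exact hflt)
  exact (hK'.image ((Nat.nth_injective hp).injOn)).mono hsub

lemma cond2 (f h : ℕ → ℕ) (X : Set ℕ)
    (ht : (X ∩ Tset f h).Finite ∨ (X \ Tset f h).Finite) :
    {n | f n < gOf X n ∧ gOf X n ≤ h n}.Finite ∨
    {n | h n < gOf X n ∧ gOf X n ≤ f n}.Finite := by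
  rcases ht with hfin | hfin
  · left
    refine hfin.subset fun n hn => ?_
    obtain ⟨h1, h2⟩ := hn
    exact ⟨mem_of_lt_gOf h1, show f n ≤ h n from le_of_lt (lt_of_lt_of_le h1 h2)⟩
  · right
    refine hfin.subset fun n hn => ?_
    obtain ⟨h1, h2⟩ := hn
    refine ⟨mem_of_lt_gOf h1, ?_⟩
    intro hT
    exact absurd (show f n ≤ h n from hT) (not_le.2 (lt_of_lt_of_le h1 h2))

lemma emp_of_lt_sNum (Y : Set (ℕ → ℕ)) (hY : #Y < sNum) : EMP (· < ·) (· ≤ ·) Y := by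
  rcases Set.finite_or_infinite Y with hfin | hinf
  · -- finite case: take the pointwise max plus one
    refine ⟨fun n => (hfin.toFinset.sup fun f => f n) + 1, ?_, ?_⟩
    · intro f hf
      have : {n | f n < (hfin.toFinset.sup fun f => f n) + 1} = Set.univ :=
        Set.eq_univ_of_forall fun n =>
          Nat.lt_succ_of_le (Finset.le_sup (f := fun q => q n) (hfin.mem_toFinset.2 hf))
      rw [this]
      exact Set.infinite_univ
    · intro f hf h hh
      left
      have : {n | f n < (hfin.toFinset.sup fun f => f n) + 1 ∧
          (hfin.toFinset.sup fun f => f n) + 1 ≤ h n} = ∅ := by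
        apply Set.eq_empty_iff_forall_notMem.2
        rintro n ⟨-, hle⟩
        have hsup : h n ≤ hfin.toFinset.sup (fun q => q n) :=
          Finset.le_sup (f := fun q : ℕ → ℕ => q n) (hfin.mem_toFinset.2 hh)
        exact Nat.not_succ_le_self _ (le_trans hle hsup)
      rw [this]
      exact Set.finite_empty
  · -- infinite case: use a reaping set for the family of T- and U-sets
    set 𝒮 : Set (Set ℕ) :=
      ((fun q : (ℕ → ℕ) × (ℕ → ℕ) => Tset q.1 q.2) '' (Y ×ˢ Y)) ∪ (Uset '' Y) with h𝒮
    have haleph : ℵ₀ ≤ #Y := by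
      have := hinf.to_subtype
      exact Cardinal.aleph0_le_mk Y
    have hcard : #𝒮 ≤ #Y := by
      have h1 : #𝒮 ≤ #((fun q : (ℕ → ℕ) × (ℕ → ℕ) => Tset q.1 q.2) '' (Y ×ˢ Y))
          + #(Uset '' Y) := Cardinal.mk_union_le _ _
      have h2 : #((fun q : (ℕ → ℕ) × (ℕ → ℕ) => Tset q.1 q.2) '' (Y ×ˢ Y)) ≤
          #(Y ×ˢ Y : Set _) := Cardinal.mk_image_le
      have h3 : #(Uset '' Y) ≤ #Y := Cardinal.mk_image_le
      have h4 : #(Y ×ˢ Y : Set _) = #Y * #Y := by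
        rw [Cardinal.mk_congr (Equiv.Set.prod Y Y)]
        simp [Cardinal.mk_prod]
      calc #𝒮 ≤ #(Y ×ˢ Y : Set _) + #Y := le_trans h1 (add_le_add h2 h3)
        _ = #Y * #Y + #Y := by rw [h4]
        _ = #Y + #Y := by rw [Cardinal.mul_eq_self haleph]
        _ = #Y := Cardinal.add_eq_self haleph
    have hns : ¬ SplittingFam 𝒮 := by
      intro hs
      have hle : sNum ≤ #𝒮 := csInf_le' ⟨𝒮, hs, rfl⟩
      exact absurd hY (not_lt.2 (le_trans hle hcard))
    unfold SplittingFam at hns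
    push_neg at hns
    obtain ⟨X, hXinf, hXun⟩ := hns
    have hXun' : ∀ s ∈ 𝒮, (X ∩ s).Finite ∨ (X \ s).Finite := by
      intro s hs
      by_cases hc : (X ∩ s).Infinite
      · exact Or.inr (hXun s hs hc)
      · exact Or.inl (Set.not_infinite.1 hc)
    refine ⟨gOf X, ?_, ?_⟩
    · intro f hf
      exact cond1 f X hXinf (hXun' (Uset f) (Or.inr ⟨f, hf, rfl⟩))
    · intro f hf h hh
      exact cond2 f h X (hXun' (Tset f h) (Or.inl ⟨(f, h), ⟨hf, hh⟩, rfl⟩))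

end Stmt7Aux

theorem stmt7 :
    sNum ≤ xNum (· < ·) (· ≤ ·) ∧
    ∀ Y : Set (ℕ → ℕ), #Y < sNum → EMP (· < ·) (· ≤ ·) Y := by
  have part2 : ∀ Y : Set (ℕ → ℕ), #Y < sNum → EMP (· < ·) (· ≤ ·) Y := emp_of_lt_sNum
  refine ⟨?_, part2⟩
  have hmem : xNum (· < ·) (· ≤ ·) ∈
      {c | ∃ X : Set (ℕ → ℕ), ¬ EMP (· < ·) (· ≤ ·) X ∧ c = #X} := by
    apply csInf_mem
    refine ⟨#(Set.univ : Set (ℕ → ℕ)), Set.univ, ?_, rfl⟩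
    rintro ⟨g, h1, h2⟩
    have hinf := h1 g (Set.mem_univ g)
    have h0 : {n | g n < g n} = (∅ : Set ℕ) := by
      ext n; simp
    rw [h0] at hinf
    exact (Set.not_infinite.2 Set.finite_empty) hinf
  obtain ⟨X, hX, hEq⟩ := hmem
  rw [hEq]
  by_contra hlt
  push_neg at hlt
  exact hX (part2 X hlt)
end

section
/- 𝔵_{<,≤} = 𝔵_{<,<} = max{𝔰, 𝔟}. -/
open Cardinal Set

/-!
A `g` avoiding `≤`-middles also avoids `<`-middles, so `𝔵_{<,≤} ≤ 𝔵_{<,<}`, and it suffices to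
bound `𝔵_{<,≤}` below and `𝔵_{<,<}` above.

For `𝔵_{<,≤} ≥ max 𝔰 𝔟`: a family bounded by `g` is avoided by `g + 1`. If `|X| < 𝔰`, the sets
`{f ≤ h}` (`f, h ∈ X`) fail to split some infinite `A`, while `|X| < 𝔰 ≤ 𝔡` yields `g` exceeding
every `f ∈ X` infinitely often on `A`; the restriction of `g` to `A` then avoids middles. Here
`𝔰 ≤ 𝔡` because, for `f` dominating the gaps of `A`, the even-numbered intervals
`[f^[k] 0, f^[k+1] 0)` split `A`.

For `𝔵_{<,<} ≤ max 𝔰 𝔟`: given an unbounded `B` and a splitting `S`, no `g` avoids `<`-middles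
in `{0} ∪ {t.indicator b̂ : b ∈ B, t ∈ S ∪ Sᶜ}`, `b̂` the running maximum of `b`. Such a `g` is
positive on an infinite set, on which it lies below some `b̂` infinitely often; a member `s` of
`S` splitting that set makes both `{sᶜ.indicator b̂ < g < s.indicator b̂}` and the symmetric set
infinite.
-/

lemma sNum_le_mk {S : Set (Set ℕ)} (h : SplittingFam S) : sNum ≤ #S := csInf_le' ⟨S, h, rfl⟩

lemma bNum_le_mk {B : Set (ℕ → ℕ)} (h : UnboundedFam B) : bNum ≤ #B := csInf_le' ⟨B, h, rfl⟩

lemma dNum_le_mk {D : Set (ℕ → ℕ)} (h : DominatingFam D) : dNum ≤ #D := csInf_le' ⟨D, h, rfl⟩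

lemma dominatingFam_univ : DominatingFam univ :=
  fun f => ⟨f, mem_univ f, by simp [LeStar]⟩

lemma unboundedFam_univ : UnboundedFam univ := by
  rintro ⟨g, hg⟩
  exact infinite_univ ((hg (g + 1) (mem_univ _)).subset fun n _ => Nat.lt_succ_self (g n))

lemma exists_dominatingFam_mk_eq : ∃ D, DominatingFam D ∧ #D = dNum := by
  obtain ⟨D, hD, h⟩ := csInf_mem (s := {c | ∃ D, DominatingFam D ∧ c = #D})
    ⟨_, univ, dominatingFam_univ, rfl⟩
  exact ⟨D, hD, h.symm⟩

lemma exists_unboundedFam_mk_eq : ∃ B, UnboundedFam B ∧ #B = bNum := by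
  obtain ⟨B, hB, h⟩ := csInf_mem (s := {c | ∃ B, UnboundedFam B ∧ c = #B})
    ⟨_, univ, unboundedFam_univ, rfl⟩
  exact ⟨B, hB, h.symm⟩

def evenBlocks (f : ℕ → ℕ) : Set ℕ := {n | ∃ k, Even k ∧ n ∈ Ico (f^[k] 0) (f^[k + 1] 0)}

lemma strictMono_iterate_zero {f : ℕ → ℕ} (hf : ∀ n, n < f n) : StrictMono fun k => f^[k] 0 :=
  strictMono_nat_of_lt_succ fun k => by rw [Function.iterate_succ_apply']; exact hf _

lemma eq_of_mem_Ico_of_strictMono {p : ℕ → ℕ} (hp : StrictMono p) {j k n : ℕ}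
    (hj : n ∈ Ico (p j) (p (j + 1))) (hk : n ∈ Ico (p k) (p (k + 1))) : j = k := by
  rw [mem_Ico] at hj hk
  rcases lt_trichotomy j k with h | h | h
  · have := hp.monotone (show _ + 1 ≤ _ from h); omega
  · exact h
  · have := hp.monotone (show _ + 1 ≤ _ from h); omega

lemma mem_evenBlocks_iff {f : ℕ → ℕ} (hf : ∀ n, n < f n) {k n : ℕ}
    (hn : n ∈ Ico (f^[k] 0) (f^[k + 1] 0)) : n ∈ evenBlocks f ↔ Even k :=
  ⟨fun ⟨_, hj, hjn⟩ => eq_of_mem_Ico_of_strictMono (strictMono_iterate_zero hf) hjn hn ▸ hj,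
    fun hk => ⟨k, hk, hn⟩⟩

/-- `A` meets every late interval `[f^[k] 0, f^[k+1] 0)`, at the point `a (f^[k] 0)`. -/
lemma splits_evenBlocks {f : ℕ → ℕ} (hf : ∀ n, n < f n) {A : Set ℕ} {a : ℕ → ℕ}
    (haA : ∀ n, a n ∈ A) (ha : ∀ n, n ≤ a n) (hdom : LeStar (fun n => a n + 1) f) :
    (A ∩ evenBlocks f).Infinite ∧ (A \ evenBlocks f).Infinite := by
  obtain ⟨N, hN⟩ := hdom.bddAbove
  have hblock : ∀ k, N < k → a (f^[k] 0) ∈ Ico (f^[k] 0) (f^[k + 1] 0) := fun k hk => by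
    have hle : k ≤ f^[k] 0 := (strictMono_iterate_zero hf).le_apply
    have hlt : a (f^[k] 0) < f (f^[k] 0) := by
      by_contra h
      have := hN (show f^[k] 0 ∈ {n | f n < a n + 1} by simp only [mem_ofPred_eq]; omega)
      omega
    rw [Function.iterate_succ_apply']
    exact ⟨ha _, hlt⟩
  have hparity : ∀ r c : ℕ, ∃ m ∈ A, c < m ∧ (m ∈ evenBlocks f ↔ Even r) := fun r c => by
    set k := 2 * (N + c + 1) + r
    have hk := hblock k (by omega)
    refine ⟨_, haA _, ?_, (mem_evenBlocks_iff hf hk).trans (by simp [k, Nat.even_add])⟩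
    have : k ≤ f^[k] 0 := (strictMono_iterate_zero hf).le_apply
    have := (mem_Ico.1 hk).1
    omega
  constructor
  · refine infinite_of_forall_exists_gt fun c => ?_
    obtain ⟨m, hm, hcm, hiff⟩ := hparity 0 c
    exact ⟨m, ⟨hm, hiff.2 Even.zero⟩, hcm⟩
  · refine infinite_of_forall_exists_gt fun c => ?_
    obtain ⟨m, hm, hcm, hiff⟩ := hparity 1 c
    exact ⟨m, ⟨hm, fun h => Nat.not_even_one (hiff.1 h)⟩, hcm⟩

lemma splittingFam_evenBlocks {D : Set (ℕ → ℕ)} (hD : DominatingFam D) :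
    SplittingFam ((fun f => evenBlocks fun n => f n + n + 1) '' D) := by
  intro A hA
  choose a haA ha using fun n => hA.exists_gt n
  obtain ⟨f, hfD, hf⟩ := hD fun n => a n + 1
  refine ⟨_, mem_image_of_mem _ hfD,
    splits_evenBlocks (fun n => by omega) haA (fun n => (ha n).le) ?_⟩
  exact hf.subset fun n hn => by simp only [mem_ofPred_eq] at hn ⊢; omega

lemma sNum_le_dNum : sNum ≤ dNum := by
  obtain ⟨D, hD, hDc⟩ := exists_dominatingFam_mk_eq
  exact hDc ▸ (sNum_le_mk (splittingFam_evenBlocks hD)).trans mk_image_le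

lemma exists_splittingFam_mk_eq : ∃ S, SplittingFam S ∧ #S = sNum := by
  obtain ⟨S, hS, h⟩ := csInf_mem (s := {c | ∃ S, SplittingFam S ∧ c = #S})
    ⟨_, _, splittingFam_evenBlocks dominatingFam_univ, rfl⟩
  exact ⟨S, hS, h.symm⟩

/-- Pigeonhole: some infinite set has the same trace on every member of the finite family. -/
lemma not_splittingFam_of_finite {S : Set (Set ℕ)} (hS : S.Finite) : ¬ SplittingFam S := by
  intro hsplit
  have := hS.to_subtype
  obtain ⟨y, hy⟩ := Finite.exists_infinite_fiber fun n (s : S) => n ∈ (s : Set ℕ)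
  obtain ⟨s, hs, hin, hout⟩ := hsplit _ (infinite_coe_iff.1 hy)
  have htrace : ∀ n ∈ (fun n (s : S) => n ∈ (s : Set ℕ)) ⁻¹' {y}, (n ∈ s ↔ y ⟨s, hs⟩) :=
    fun n hn => Iff.of_eq (congrFun hn ⟨s, hs⟩)
  by_cases hys : y ⟨s, hs⟩
  · exact hout (finite_empty.subset fun n hn => hn.2 ((htrace n hn.1).2 hys))
  · exact hin (finite_empty.subset fun n hn => hys ((htrace n hn.1).1 hn.2))

lemma aleph0_le_sNum : ℵ₀ ≤ sNum := by
  obtain ⟨S, hS, hSc⟩ := exists_splittingFam_mk_eq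
  by_contra! h
  exact not_splittingFam_of_finite (lt_aleph0_iff_set_finite.1 (hSc ▸ h)) hS

lemma exists_infinite_lt_on_of_mk_lt_dNum {X : Set (ℕ → ℕ)} (hX : #X < dNum) {A : Set ℕ}
    (hA : A.Infinite) : ∃ g : ℕ → ℕ, ∀ f ∈ X, {n | n ∈ A ∧ f n < g n}.Infinite := by
  set emb := hA.natEmbedding A
  set e : ℕ → ℕ := fun k => emb k
  have he : Function.Injective e := Subtype.val_injective.comp emb.injective
  have hnd : ¬ DominatingFam ((· ∘ e) '' X) := fun h =>
    ((dNum_le_mk h).trans mk_image_le).not_gt hX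
  simp only [DominatingFam, not_forall, mem_image, exists_exists_and_eq_and, not_exists,
    not_and] at hnd
  obtain ⟨u, hu⟩ := hnd
  refine ⟨u ∘ Function.invFun e, fun f hf => ((infinite_image_iff he.injOn).2 (hu f hf)).mono ?_⟩
  rintro _ ⟨k, hk, rfl⟩
  exact ⟨(emb k).2, by simpa [Function.leftInverse_invFun he k] using hk⟩

lemma AvoidsMiddles.mono_right {R S S' : ℕ → ℕ → Prop} {g : ℕ → ℕ} {X : Set (ℕ → ℕ)}
    (h : AvoidsMiddles R S g X) (hS : ∀ a b, S' a b → S a b) : AvoidsMiddles R S' g X :=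
  ⟨h.1, fun f hf k hk => (h.2 f hf k hk).imp
    (fun hfin => hfin.subset fun _ hn => ⟨hn.1, hS _ _ hn.2⟩)
    (fun hfin => hfin.subset fun _ hn => ⟨hn.1, hS _ _ hn.2⟩)⟩

lemma avoidsMiddles_succ_of_bounded {X : Set (ℕ → ℕ)} {g : ℕ → ℕ} (hg : ∀ f ∈ X, LeStar f g) :
    AvoidsMiddles (· < ·) (· ≤ ·) (fun n => g n + 1) X := by
  refine ⟨fun f hf => (hg f hf).infinite_compl.mono fun n hn => ?_,
    fun f _ h hh => Or.inl ((hg h hh).subset fun n hn => ?_)⟩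
  · simp only [mem_compl_iff, mem_ofPred_eq, not_lt] at hn ⊢; omega
  · simp only [mem_ofPred_eq] at hn ⊢; omega

lemma avoidsMiddles_indicator_of_unsplit {X : Set (ℕ → ℕ)} {A : Set ℕ} {g : ℕ → ℕ}
    (hg : ∀ f ∈ X, {n | n ∈ A ∧ f n < g n}.Infinite)
    (hA : ∀ f ∈ X, ∀ h ∈ X, (A ∩ {n | f n ≤ h n}).Finite ∨ (A \ {n | f n ≤ h n}).Finite) :
    AvoidsMiddles (· < ·) (· ≤ ·) (A.indicator g) X := by
  have hsupp : ∀ {n m : ℕ}, m < A.indicator g n → n ∈ A := fun h =>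
    mem_of_indicator_ne_zero (Nat.ne_zero_of_lt h)
  refine ⟨fun f hf => (hg f hf).mono ?_, fun f hf h hh => ?_⟩
  · rintro n ⟨hn, hlt⟩
    rwa [mem_ofPred_eq, indicator_of_mem hn]
  · refine (hA f hf h hh).imp (fun hfin => hfin.subset ?_) (fun hfin => hfin.subset ?_) <;>
      rintro n ⟨h1, h2⟩ <;> exact ⟨hsupp h1, by simp only [mem_ofPred_eq] at h1 h2 ⊢; omega⟩

lemma bNum_le_mk_of_not_emp {X : Set (ℕ → ℕ)} (hX : ¬ EMP (· < ·) (· ≤ ·) X) : bNum ≤ #X :=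
  bNum_le_mk fun ⟨_, hg⟩ => hX ⟨_, avoidsMiddles_succ_of_bounded hg⟩

lemma sNum_le_mk_of_not_emp {X : Set (ℕ → ℕ)} (hX : ¬ EMP (· < ·) (· ≤ ·) X) : sNum ≤ #X := by
  by_contra! hlt
  have hunsplit : ¬ SplittingFam (image2 (fun f h => {n | f n ≤ h n}) X X) := fun hS =>
    ((sNum_le_mk hS).trans mk_image2_le).not_gt (mul_lt_of_lt aleph0_le_sNum hlt hlt)
  simp only [SplittingFam, not_forall, not_exists, not_and] at hunsplit
  obtain ⟨A, hA, hAX⟩ := hunsplit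
  obtain ⟨g, hg⟩ := exists_infinite_lt_on_of_mk_lt_dNum (hlt.trans_le sNum_le_dNum) hA
  exact hX ⟨_, avoidsMiddles_indicator_of_unsplit hg fun f hf h hh =>
    (not_or_of_imp (hAX _ (mem_image2_of_mem hf hh))).imp not_infinite.1 not_infinite.1⟩

def runningMax (b : ℕ → ℕ) (n : ℕ) : ℕ := (Finset.range (n + 1)).sup b

lemma le_runningMax (b : ℕ → ℕ) {m n : ℕ} (hmn : m ≤ n) : b m ≤ runningMax b n :=
  Finset.le_sup (Finset.mem_range.2 (Nat.lt_succ_of_le hmn))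

def maskedMaxFam (B : Set (ℕ → ℕ)) (S : Set (Set ℕ)) : Set (ℕ → ℕ) :=
  insert 0 (image2 (fun b t => t.indicator (runningMax b)) B (S ∪ compl '' S))

lemma not_emp_maskedMaxFam {B : Set (ℕ → ℕ)} {S : Set (Set ℕ)} (hB : UnboundedFam B)
    (hS : SplittingFam S) : ¬ EMP (· < ·) (· < ·) (maskedMaxFam B S) := by
  rintro ⟨g, hpos, hmid⟩
  have hA : {n | 0 < g n}.Infinite := hpos 0 (mem_insert _ _)
  choose a haA ha using fun n => hA.exists_gt n
  obtain ⟨b, hbB, hb⟩ : ∃ b ∈ B, ¬ LeStar b (g ∘ a) := by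
    by_contra! h
    exact hB ⟨_, h⟩
  set A' := {m | 0 < g m ∧ g m < runningMax b m}
  have hA' : A'.Infinite := infinite_of_forall_exists_gt fun c => by
    obtain ⟨n, hn, hcn⟩ := Set.Infinite.exists_gt hb c
    exact ⟨a n, ⟨haA n, lt_of_lt_of_le hn (le_runningMax b (ha n).le)⟩, hcn.trans (ha n)⟩
  obtain ⟨s, hsS, hin, hout⟩ := hS A' hA'
  have hmem : ∀ t ∈ S ∪ compl '' S, t.indicator (runningMax b) ∈ maskedMaxFam B S :=
    fun t ht => mem_insert_of_mem _ (mem_image2_of_mem hbB ht)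
  have hmiddle : ∀ t, A' ∩ t ⊆
      {n | tᶜ.indicator (runningMax b) n < g n ∧ g n < t.indicator (runningMax b) n} := by
    rintro t n ⟨⟨hgpos, hglt⟩, hnt⟩
    simp [hgpos, hglt, hnt]
  rcases hmid _ (hmem _ (Or.inr (mem_image_of_mem _ hsS))) _ (hmem _ (Or.inl hsS)) with hfin | hfin
  · exact hin (hfin.subset (hmiddle s))
  · exact hout (hfin.subset (by simpa [sdiff_eq] using hmiddle sᶜ))

lemma mk_maskedMaxFam_le {B : Set (ℕ → ℕ)} {S : Set (Set ℕ)} {κ : Cardinal} (hκ : ℵ₀ ≤ κ)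
    (hB : #B ≤ κ) (hS : #S ≤ κ) : #(maskedMaxFam B S) ≤ κ :=
  calc #(maskedMaxFam B S) ≤ #B * #↑(S ∪ compl '' S) + 1 :=
        mk_insert_le.trans (add_le_add mk_image2_le le_rfl)
    _ ≤ κ * (κ + κ) + 1 := by
        gcongr
        exact (mk_union_le _ _).trans (add_le_add hS (mk_image_le.trans hS))
    _ = κ := by rw [add_eq_self hκ, mul_eq_self hκ, add_one_eq hκ]

lemma exists_not_emp_mk_le_max : ∃ X, ¬ EMP (· < ·) (· < ·) X ∧ #X ≤ max sNum bNum := by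
  obtain ⟨B, hB, hBc⟩ := exists_unboundedFam_mk_eq
  obtain ⟨S, hS, hSc⟩ := exists_splittingFam_mk_eq
  exact ⟨_, not_emp_maskedMaxFam hB hS, mk_maskedMaxFam_le
    (aleph0_le_sNum.trans (le_max_left _ _)) (hBc ▸ le_max_right _ _) (hSc ▸ le_max_left _ _)⟩

lemma xNum_le_mk {R S : ℕ → ℕ → Prop} {X : Set (ℕ → ℕ)} (hX : ¬ EMP R S X) :
    xNum R S ≤ #X :=
  csInf_le' ⟨X, hX, rfl⟩

lemma le_xNum {R S : ℕ → ℕ → Prop} {c : Cardinal} (hne : ∃ X, ¬ EMP R S X)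
    (h : ∀ X, ¬ EMP R S X → c ≤ #X) : c ≤ xNum R S := by
  obtain ⟨X, hX⟩ := hne
  exact le_csInf ⟨_, X, hX, rfl⟩ fun _ ⟨Y, hY, hc⟩ => hc ▸ h Y hY

theorem stmt8 :
    xNum (· < ·) (· ≤ ·) = max sNum bNum ∧
    xNum (· < ·) (· < ·) = max sNum bNum := by
  obtain ⟨X, hX, hXle⟩ := exists_not_emp_mk_le_max
  have hweaken : ∀ {Y}, ¬ EMP (· < ·) (· < ·) Y → ¬ EMP (· < ·) (· ≤ ·) Y := fun hY ⟨g, hg⟩ =>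
    hY ⟨g, hg.mono_right fun _ _ => le_of_lt⟩
  have hlower : ∀ Y, ¬ EMP (· < ·) (· ≤ ·) Y → max sNum bNum ≤ #Y := fun _ hY =>
    max_le (sNum_le_mk_of_not_emp hY) (bNum_le_mk_of_not_emp hY)
  exact ⟨le_antisymm ((xNum_le_mk (hweaken hX)).trans hXle) (le_xNum ⟨X, hweaken hX⟩ hlower),
    le_antisymm ((xNum_le_mk hX).trans hXle) (le_xNum ⟨X, hX⟩ fun Y hY => hlower Y (hweaken hY))⟩
end

section
/- 𝔟 equals 𝔟*, the minimal cardinality of a subset B of ℕ^ℕ such that B is unbounded on every infinite subset of ℕ (i.e., for every infinite A ⊆ ℕ and every g ∈ ℕ^ℕ there is f ∈ B with f(n) > g(n) for infinitely many n ∈ A). -/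
open Cardinal Set

/-- The cardinal 𝔟*: minimal size of a family unbounded on every infinite subset of ℕ. -/
noncomputable def bStarNum : Cardinal :=
  sInf {c | ∃ B : Set (ℕ → ℕ),
    (∀ A : Set ℕ, A.Infinite → ∀ g : ℕ → ℕ, ∃ f ∈ B, {n | n ∈ A ∧ g n < f n}.Infinite) ∧
    c = #B}


private def monoOf (f : ℕ → ℕ) : ℕ → ℕ := fun n => (Finset.range (n+1)).sup f

private lemma le_monoOf (f : ℕ → ℕ) (n : ℕ) : f n ≤ monoOf f n :=
  Finset.le_sup (Finset.self_mem_range_succ n)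

private lemma monoOf_mono (f : ℕ → ℕ) {k n : ℕ} (h : k ≤ n) : monoOf f k ≤ monoOf f n :=
  Finset.sup_mono (Finset.range_subset_range.2 (by omega))

theorem stmt9 : bNum = bStarNum := by
  apply le_antisymm
  · -- bNum ≤ bStarNum
    have hne : {c | ∃ B : Set (ℕ → ℕ),
        (∀ A : Set ℕ, A.Infinite → ∀ g : ℕ → ℕ, ∃ f ∈ B, {n | n ∈ A ∧ g n < f n}.Infinite) ∧
        c = #B}.Nonempty := by
      refine ⟨#(Set.univ : Set (ℕ → ℕ)), Set.univ, ?_, rfl⟩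
      intro A hA g
      refine ⟨fun n => g n + 1, trivial, ?_⟩
      have : {n | n ∈ A ∧ g n < g n + 1} = A := by ext n; simp
      rwa [this]
    obtain ⟨B, hB, hEq⟩ := csInf_mem hne
    rw [bStarNum, hEq]
    apply csInf_le'
    refine ⟨B, ?_, rfl⟩
    rintro ⟨g, hg⟩
    obtain ⟨f, hfB, hinf⟩ := hB Set.univ Set.infinite_univ g
    have : {n | n ∈ Set.univ ∧ g n < f n} = {n | g n < f n} := by ext n; simp
    rw [this] at hinf
    exact hinf (hg f hfB)
  · -- bStarNum ≤ bNum
    have hne : {c | ∃ B, UnboundedFam B ∧ c = #B}.Nonempty := by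
      refine ⟨#(Set.univ : Set (ℕ → ℕ)), Set.univ, ?_, rfl⟩
      rintro ⟨g, hg⟩
      have := hg (fun n => g n + 1) trivial
      have h2 : {n | g n < g n + 1} = Set.univ := by ext n; simp
      rw [LeStar, h2] at this
      exact Set.infinite_univ this
    obtain ⟨B, hB, hEq⟩ := csInf_mem hne
    rw [bNum, hEq]
    calc bStarNum ≤ #(monoOf '' B) := by
          apply csInf_le'
          refine ⟨monoOf '' B, ?_, rfl⟩
          intro A hA g
          -- choose e k ∈ A with k ≤ e k
          have hek : ∀ k : ℕ, ∃ a ∈ A, k ≤ a := fun k => by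
            obtain ⟨a, ha, hka⟩ := hA.exists_gt k
            exact ⟨a, ha, hka.le⟩
          choose e heA hle using hek
          -- B is not bounded by fun k => g (e k)
          have : ¬ ∀ f ∈ B, LeStar f (fun k => g (e k)) := fun h => hB ⟨_, h⟩
          push_neg at this
          obtain ⟨f, hfB, hf⟩ := this
          have hK : {k | g (e k) < f k}.Infinite := hf
          refine ⟨monoOf f, ⟨f, hfB, rfl⟩, ?_⟩
          apply Set.infinite_of_forall_exists_gt
          intro N
          obtain ⟨k, hk, hNk⟩ := hK.exists_gt N
          refine ⟨e k, ⟨heA k, ?_⟩, lt_of_lt_of_le hNk (hle k)⟩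
          calc g (e k) < f k := hk
            _ ≤ monoOf f k := le_monoOf f k
            _ ≤ monoOf f (e k) := monoOf_mono f (hle k)
      _ ≤ #B := Cardinal.mk_image_le
end

section
/- add(𝔅, 𝔇fin) = add(𝔅, 𝔇) = 𝔡: the union of fewer than 𝔡 bounded subsets of ℕ^ℕ is not finitely dominating, and 𝔡 many bounded sets can union to a dominating set. -/
open Cardinal Set

lemma leStar_refl (f : ℕ → ℕ) : LeStar f f := by simp [LeStar]

lemma dNum_mem : ∃ D, DominatingFam D ∧ dNum = #D := by
  have h : {c | ∃ D, DominatingFam D ∧ c = #D}.Nonempty :=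
    ⟨#(Set.univ : Set (ℕ → ℕ)), Set.univ, fun f => ⟨f, trivial, leStar_refl f⟩, rfl⟩
  exact csInf_mem h

lemma dom_finDom {D : Set (ℕ → ℕ)} (hD : DominatingFam D) : FinDominating D := by
  intro f
  obtain ⟨g, hg, hfg⟩ := hD f
  refine ⟨{g}, by simpa using hg, ?_⟩
  have : (fun n => ({g} : Finset (ℕ → ℕ)).sup (fun h => h n)) = g := by
    funext n; simp
  rw [this]; exact hfg

lemma clB_not_finDom {Y : Set (ℕ → ℕ)} (hY : ClB Y) : ¬ FinDominating Y := by
  obtain ⟨g, hg⟩ := hY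
  intro hFD
  obtain ⟨F, hF, hle⟩ := hFD (fun n => g n + 1)
  have hbad : ({n | g n < (fun n => g n + 1) n}ᶜ ∪ ⋃ h ∈ F, {n | g n < h n}).Finite := by
    have h1 : ∀ h ∈ F, ({n | g n < h n}).Finite := fun h hh => hg h (hF hh)
    have : ({n | g n < (fun n => g n + 1) n}ᶜ : Set ℕ) = ∅ := by
      ext n; simp
    rw [this]
    simpa using Set.Finite.biUnion F.finite_toSet h1
  have hsub : ({n | g n < (fun n => g n + 1) n}ᶜ ∪ ⋃ h ∈ F, {n | g n < h n})ᶜ ⊆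
      {n | (fun n => F.sup (fun h => h n)) n < (fun n => g n + 1) n} := by
    intro n hn
    simp only [Set.mem_compl_iff, Set.mem_union, Set.mem_iUnion, not_or, not_exists] at hn
    have : F.sup (fun h => h n) ≤ g n := by
      apply Finset.sup_le
      intro h hh
      have := hn.2 h
      simp only [Set.mem_setOf_eq, not_lt] at this
      exact this hh
    simpa using Nat.lt_succ_of_le this
  have : (({n | g n < (fun n => g n + 1) n}ᶜ ∪ ⋃ h ∈ F, {n | g n < h n})ᶜ : Set ℕ).Finite :=
    hle.subset hsub
  have huniv : (Set.univ : Set ℕ).Finite := by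
    have h2 := this.union hbad
    rwa [Set.compl_union_self] at h2
  exact Set.infinite_univ huniv

/-- Eventual transitivity helper. -/
lemma leStar_trans_ptwise {f g h : ℕ → ℕ} (h1 : LeStar f g) (E : Set ℕ) (hE : E.Finite)
    (h2 : ∀ n ∉ E, g n ≤ h n) : LeStar f h := by
  apply (h1.union hE).subset
  intro n hn
  simp only [Set.mem_setOf_eq] at hn
  by_cases hne : n ∈ E
  · exact Or.inr hne
  · exact Or.inl (lt_of_le_of_lt (h2 n hne) hn)

lemma dNum_le_add {Fam : Set (Set (ℕ → ℕ))} (hB : ∀ Y ∈ Fam, ClB Y)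
    (hFD : FinDominating (⋃₀ Fam)) : dNum ≤ #Fam := by
  classical
  choose! b hb using hB
  set S : Set (ℕ → ℕ) := b '' Fam with hS
  by_cases hSfin : S.Finite
  · -- then the union is bounded, contradicting finite domination
    exfalso
    apply clB_not_finDom (Y := ⋃₀ Fam) ?_ hFD
    refine ⟨fun n => hSfin.toFinset.sup (fun h => h n), ?_⟩
    rintro f ⟨Y, hY, hfY⟩
    have h1 : LeStar f (b Y) := hb Y hY f hfY
    apply h1.subset
    intro n hn
    simp only [Set.mem_setOf_eq] at hn ⊢
    have : b Y n ≤ hSfin.toFinset.sup (fun h => h n) :=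
      Finset.le_sup (f := fun h : ℕ → ℕ => h n) (hSfin.mem_toFinset.mpr ⟨Y, hY, rfl⟩)
    exact lt_of_le_of_lt this hn
  · have hSinf : S.Infinite := hSfin
    haveI : Infinite ↥S := hSinf.to_subtype
    -- the dominating family of finite suprema from S
    set D : Set (ℕ → ℕ) :=
      Set.range (fun T : Finset ↥S => fun n => T.sup (fun g => (g : ℕ → ℕ) n)) with hD
    have hdom : DominatingFam D := by
      intro f
      obtain ⟨F, hFsub, hle⟩ := hFD f
      have hc : ∀ h : ℕ → ℕ, h ∈ ⋃₀ Fam → ∃ s, s ∈ S ∧ LeStar h s := by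
        rintro h ⟨Y, hY, hhY⟩
        exact ⟨b Y, ⟨Y, hY, rfl⟩, hb Y hY h hhY⟩
      choose! c hc1 hc2 using hc
      set T : Finset ↥S :=
        F.attach.image (fun h => (⟨c h.1, hc1 h.1 (hFsub h.2)⟩ : ↥S)) with hT
      refine ⟨fun n => T.sup (fun g => (g : ℕ → ℕ) n), ⟨T, rfl⟩, ?_⟩
      refine leStar_trans_ptwise hle (⋃ h ∈ F, {n | c h n < h n}) ?_ ?_
      · exact Set.Finite.biUnion F.finite_toSet (fun h hh => hc2 h (hFsub hh))
      · intro n hn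
        simp only [Set.mem_iUnion, not_exists] at hn
        apply Finset.sup_le
        intro h hh
        have h1 : h n ≤ c h n := by
          have := hn h
          simp only [Set.mem_setOf_eq, not_exists, not_lt] at this
          exact this hh
        have hm : (⟨c h, hc1 h (hFsub hh)⟩ : ↥S) ∈ T := by
          simp only [hT, Finset.mem_image, Finset.mem_attach, true_and]
          exact ⟨⟨h, hh⟩, rfl⟩
        have h2 : c h n ≤ T.sup (fun g => (g : ℕ → ℕ) n) :=
          Finset.le_sup (f := fun g : ↥S => (g : ℕ → ℕ) n) hm
        exact le_trans h1 h2
    calc dNum ≤ #D := csInf_le' ⟨D, hdom, rfl⟩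
      _ ≤ #(Finset ↥S) := Cardinal.mk_range_le
      _ = #↥S := Cardinal.mk_finset_of_infinite ↥S
      _ ≤ #Fam := Cardinal.mk_image_le

lemma add_le_dNum : ∃ Fam : Set (Set (ℕ → ℕ)), (∀ Y ∈ Fam, ClB Y) ∧
    DominatingFam (⋃₀ Fam) ∧ #Fam = dNum := by
  obtain ⟨D0, hD0, hcard⟩ := dNum_mem
  refine ⟨(fun g => ({g} : Set (ℕ → ℕ))) '' D0, ?_, ?_, ?_⟩
  · rintro Y ⟨g, _, rfl⟩
    exact ⟨g, fun f hf => by rw [Set.mem_singleton_iff] at hf; rw [hf]; exact leStar_refl g⟩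
  · have : ⋃₀ ((fun g => ({g} : Set (ℕ → ℕ))) '' D0) = D0 := by
      ext f; simp
    rw [this]; exact hD0
  · rw [Cardinal.mk_image_eq (fun a b => by simp), hcard]

theorem stmt10 : addNum ClB ClDfin = dNum ∧ addNum ClB ClD = dNum := by
  obtain ⟨Fam0, hB0, hD0, hc0⟩ := add_le_dNum
  have hfin0 : ¬ ClDfin (⋃₀ Fam0) := not_not.mpr (dom_finDom hD0)
  have hd0 : ¬ ClD (⋃₀ Fam0) := not_not.mpr hD0
  constructor <;> apply le_antisymm
  · exact hc0 ▸ csInf_le' ⟨Fam0, hB0, hfin0, rfl⟩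
  · refine le_csInf ⟨#Fam0, Fam0, hB0, hfin0, rfl⟩ ?_
    rintro c ⟨Fam, hB, hJ, rfl⟩
    exact dNum_le_add hB (not_not.mp hJ)
  · exact hc0 ▸ csInf_le' ⟨Fam0, hB0, hd0, rfl⟩
  · refine le_csInf ⟨#Fam0, Fam0, hB0, hd0, rfl⟩ ?_
    rintro c ⟨Fam, hB, hJ, rfl⟩
    exact dNum_le_add hB (dom_finDom (not_not.mp hJ))
end

section
/- add(𝔛, 𝔇fin) = 2: there exist two subsets Y₀, Y₁ of ℕ^ℕ each satisfying the excluded middle property with respect to ⟨<,≤⟩, whose union is finitely dominating. -/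
open Cardinal Set

section Aux

/-- A finite nonempty set with a total transitive relation has a minimum. -/
private lemma finset_exists_min {α : Type*} (R : α → α → Prop)
    (htrans : ∀ a b c, R a b → R b c → R a c) :
    ∀ (F : Finset α), (∀ a ∈ F, ∀ b ∈ F, R a b ∨ R b a) → F.Nonempty →
      ∃ a ∈ F, ∀ b ∈ F, R a b := by
  intro F
  induction F using Finset.cons_induction with
  | empty => intro _ h; exact absurd h (by simp)
  | cons x F hx ih =>
    intro htot _
    have hxx : R x x := by
      rcases htot x (Finset.mem_cons_self x F) x (Finset.mem_cons_self x F) with h | h <;> exact h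
    rcases F.eq_empty_or_nonempty with rfl | hne
    · refine ⟨x, Finset.mem_cons_self x _, ?_⟩
      intro b hb
      rcases Finset.mem_cons.mp hb with rfl | hb
      · exact hxx
      · exact absurd hb (by simp)
    · obtain ⟨a, haF, ha⟩ := ih (fun a ha b hb =>
        htot a (Finset.mem_cons_of_mem ha) b (Finset.mem_cons_of_mem hb)) hne
      rcases htot a (Finset.mem_cons_of_mem haF) x (Finset.mem_cons_self x F) with hax | hxa
      · refine ⟨a, Finset.mem_cons_of_mem haF, ?_⟩
        intro b hb
        rcases Finset.mem_cons.mp hb with rfl | hb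
        · exact hax
        · exact ha b hb
      · refine ⟨x, Finset.mem_cons_self x F, ?_⟩
        intro b hb
        rcases Finset.mem_cons.mp hb with rfl | hb
        · exact hxx
        · exact htrans x a b hxa (ha b hb)

/-- An EMP set is not finitely dominating. -/
private lemma clX_not_finDominating {Y : Set (ℕ → ℕ)} (hY : ClX Y) : ¬ FinDominating Y := by
  obtain ⟨g, h1, h2⟩ := hY
  intro hd
  obtain ⟨F, hF, hle'⟩ := hd (fun n => g n + 1)
  have hle : {n | F.sup (fun h => h n) < g n + 1}.Finite := hle'
  rcases F.eq_empty_or_nonempty with rfl | hne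
  · have heq : {n : ℕ | (∅ : Finset (ℕ → ℕ)).sup (fun h => h n) < g n + 1} = Set.univ := by
      ext n; simp [Nat.lt_succ_iff]
    rw [heq] at hle
    exact Set.infinite_univ hle
  · -- the "middle" preorder
    set Rel : (ℕ → ℕ) → (ℕ → ℕ) → Prop :=
      fun f h => {n | f n < g n ∧ g n ≤ h n}.Finite with hRel
    have htrans : ∀ a b c, Rel a b → Rel b c → Rel a c := by
      intro a b c hab hbc
      refine Set.Finite.subset (hab.union hbc) ?_
      intro n hn
      rcases le_or_gt (g n) (b n) with h | h
      · exact Or.inl ⟨hn.1, h⟩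
      · exact Or.inr ⟨h, hn.2⟩
    have htot : ∀ a ∈ F, ∀ b ∈ F, Rel a b ∨ Rel b a := by
      intro a ha b hb
      exact h2 a (hF ha) b (hF hb)
    obtain ⟨hstar, hstarF, hmin⟩ := finset_exists_min Rel htrans F htot hne
    have hI : {n | hstar n < g n}.Infinite := h1 hstar (hF hstarF)
    -- the bad sets are finite
    have hfin : (({n | F.sup (fun h => h n) < g n + 1}) ∪
        ⋃ h ∈ F, {n | hstar n < g n ∧ g n ≤ h n}).Finite := by
      refine hle.union ?_
      exact Set.Finite.biUnion F.finite_toSet (fun h hh => hmin h (by simpa using hh))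
    refine hI ?_
    refine hfin.subset ?_
    intro n hn
    rcases Nat.lt_or_ge (F.sup (fun h => h n)) (g n + 1) with h | h
    · exact Or.inl h
    · obtain ⟨i, hiF, hieq⟩ := Finset.exists_mem_eq_sup F hne (fun t => t n)
      have h' : g n + 1 ≤ i n := hieq ▸ h
      exact Or.inr (Set.mem_biUnion hiF ⟨hn, Nat.le_of_succ_le h'⟩)

private def Yev : Set (ℕ → ℕ) := {f | ∀ n, Even n → f n = 0}
private def Yod : Set (ℕ → ℕ) := {f | ∀ n, ¬ Even n → f n = 0}

private lemma clX_Yev : ClX Yev := by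
  refine ⟨fun n => if Even n then 1 else 0, ?_, ?_⟩
  · intro f hf
    refine Set.infinite_of_injective_forall_mem (f := fun k : ℕ => 2 * k) ?_ ?_
    · intro a b h
      have h' : 2 * a = 2 * b := h
      omega
    · intro k
      have he : Even (2 * k) := ⟨k, by ring⟩
      show f (2 * k) < if Even (2 * k) then 1 else 0
      rw [hf _ he, if_pos he]
      exact Nat.zero_lt_one
  · intro f hf h hh
    left
    convert Set.finite_empty
    ext n
    simp only [Set.mem_setOf_eq, Set.mem_empty_iff_false, iff_false]
    rintro ⟨h1, h2⟩
    by_cases he : Even n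
    · rw [hh n he] at h2; simp [he] at h2
    · simp [he] at h1

private lemma clX_Yod : ClX Yod := by
  refine ⟨fun n => if Even n then 0 else 1, ?_, ?_⟩
  · intro f hf
    refine Set.infinite_of_injective_forall_mem (f := fun k : ℕ => 2 * k + 1) ?_ ?_
    · intro a b h
      have h' : 2 * a + 1 = 2 * b + 1 := h
      omega
    · intro k
      have he : ¬ Even (2 * k + 1) := by
        intro h; obtain ⟨m, hm⟩ := h; omega
      show f (2 * k + 1) < if Even (2 * k + 1) then 0 else 1
      rw [hf _ he, if_neg he]
      exact Nat.zero_lt_one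
  · intro f hf h hh
    left
    convert Set.finite_empty
    ext n
    simp only [Set.mem_setOf_eq, Set.mem_empty_iff_false, iff_false]
    rintro ⟨h1, h2⟩
    by_cases he : Even n
    · simp [he] at h1
    · rw [hh n he] at h2; simp [he] at h2

private lemma finDom_union : FinDominating (Yev ∪ Yod) := by
  classical
  intro f
  set f0 : ℕ → ℕ := fun n => if Even n then 0 else f n with hf0
  set f1 : ℕ → ℕ := fun n => if Even n then f n else 0 with hf1
  refine ⟨{f0, f1}, ?_, ?_⟩
  · intro h hh
    simp only [Finset.coe_insert, Finset.coe_singleton, Set.mem_insert_iff,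
      Set.mem_singleton_iff] at hh
    rcases hh with rfl | rfl
    · exact Or.inl (fun n he => by simp [hf0, he])
    · exact Or.inr (fun n he => by simp [hf1, he])
  · show {n | (({f0, f1} : Finset (ℕ → ℕ)).sup fun h => h n) < f n}.Finite
    convert Set.finite_empty
    ext n
    simp only [Set.mem_setOf_eq, Set.mem_empty_iff_false, iff_false, not_lt]
    by_cases he : Even n
    · have : f1 n = f n := by simp [hf1, he]
      calc f n = f1 n := this.symm
        _ ≤ _ := Finset.le_sup (f := fun h => h n) (b := f1) (by simp)
    · have : f0 n = f n := by simp [hf0, he]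
      calc f n = f0 n := this.symm
        _ ≤ _ := Finset.le_sup (f := fun h => h n) (b := f0) (by simp)

private lemma Yev_ne_Yod : Yev ≠ Yod := by
  intro h
  have h1 : (fun n : ℕ => if Even n then 0 else 1) ∈ Yev := fun n he => by simp [he]
  rw [h] at h1
  have := h1 1 (by simp)
  simp at this

end Aux

theorem stmt11 :
    addNum ClX ClDfin = 2 ∧
    ∃ Y₀ Y₁ : Set (ℕ → ℕ), ClX Y₀ ∧ ClX Y₁ ∧ FinDominating (Y₀ ∪ Y₁) := by
  have hmem : (2 : Cardinal) ∈
      {c | ∃ Fam : Set (Set (ℕ → ℕ)), (∀ Y ∈ Fam, ClX Y) ∧ ¬ ClDfin (⋃₀ Fam) ∧ c = #Fam} := by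
    refine ⟨{Yev, Yod}, ?_, ?_, ?_⟩
    · intro Y hY
      rcases hY with rfl | rfl
      · exact clX_Yev
      · exact clX_Yod
    · rw [Set.sUnion_pair]
      exact not_not.mpr finDom_union
    · rw [Cardinal.mk_insert (by simpa using Yev_ne_Yod), Cardinal.mk_singleton]
      exact (one_add_one_eq_two).symm
  constructor
  · refine le_antisymm (csInf_le' hmem) (le_csInf ⟨2, hmem⟩ ?_)
    rintro c ⟨Fam, hX, hD, rfl⟩
    by_contra hlt
    push_neg at hlt
    have hsub : Fam.Subsingleton := by
      by_contra hns
      rw [Set.not_subsingleton_iff] at hns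
      obtain ⟨a, ha, b, hb, hab⟩ := hns
      have : (2 : Cardinal) ≤ #Fam :=
        Cardinal.two_le_iff.mpr ⟨⟨a, ha⟩, ⟨b, hb⟩, by simpa using hab⟩
      exact absurd (lt_of_le_of_lt this hlt) (lt_irrefl _)
    have hFD : FinDominating (⋃₀ Fam) := not_not.mp hD
    rcases hsub.eq_empty_or_singleton with rfl | ⟨Y, rfl⟩
    · rw [Set.sUnion_empty] at hFD
      have hXe : ClX (∅ : Set (ℕ → ℕ)) :=
        ⟨fun _ => 0, fun f hf => absurd hf (Set.notMem_empty f),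
          fun f hf => absurd hf (Set.notMem_empty f)⟩
      exact clX_not_finDominating hXe hFD
    · rw [Set.sUnion_singleton] at hFD
      exact clX_not_finDominating (hX Y rfl) hFD
  · exact ⟨Yev, Yod, clX_Yev, clX_Yod, finDom_union⟩
end

section
/- add(𝔅, 𝔛) ≤ 𝔟: there exists a family of 𝔟 many ≤*-bounded subsets of ℕ^ℕ whose union does not satisfy the excluded middle property with respect to ⟨<,≤⟩. -/
open Cardinal Set

private def env (b : ℕ → ℕ) (n : ℕ) : ℕ := (Finset.range (n+1)).sup b

private lemma le_env (b : ℕ → ℕ) (n : ℕ) : b n ≤ env b n :=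
  Finset.le_sup (Finset.self_mem_range_succ n)

private lemma env_mono (b : ℕ → ℕ) {m n : ℕ} (h : m ≤ n) : env b m ≤ env b n :=
  Finset.sup_mono (Finset.range_subset_range.2 (by omega))

private def Zset (b : ℕ → ℕ) : Set (ℕ → ℕ) := {f | ∀ n, f n ≤ env b n}

private lemma split_infinite {A : Set ℕ} (hA : A.Infinite) :
    ∃ A1 A2 : Set ℕ, A1 ⊆ A ∧ A2 ⊆ A ∧ A1.Infinite ∧ A2.Infinite ∧ Disjoint A1 A2 := by
  classical
  have hA' : {n | n ∈ A}.Infinite := by simpa using hA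
  have hinj : Function.Injective (Nat.nth (· ∈ A)) := Nat.nth_injective hA'
  have hmem : ∀ k, Nat.nth (· ∈ A) k ∈ A := fun k => Nat.nth_mem_of_infinite hA' k
  have hEv : {k : ℕ | Even k}.Infinite :=
    Set.infinite_of_injective_forall_mem (f := fun k : ℕ => 2 * k)
      (fun a b h => by simp only at h; omega) (fun a => ⟨a, by ring⟩)
  have hOd : {k : ℕ | ¬ Even k}.Infinite :=
    Set.infinite_of_injective_forall_mem (f := fun k : ℕ => 2 * k + 1)
      (fun a b h => by simp only at h; omega) (fun a => by simp [Nat.even_add_one, parity_simps])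
  refine ⟨Nat.nth (· ∈ A) '' {k | Even k}, Nat.nth (· ∈ A) '' {k | ¬ Even k},
    ?_, ?_, hEv.image (hinj.injOn), hOd.image (hinj.injOn), ?_⟩
  · rintro x ⟨k, _, rfl⟩; exact hmem k
  · rintro x ⟨k, _, rfl⟩; exact hmem k
  · rw [Set.disjoint_left]
    rintro x ⟨k, hk, rfl⟩ ⟨j, hj, hje⟩
    exact hj (hinj hje ▸ hk)

private lemma key {B : Set (ℕ → ℕ)} (hB : UnboundedFam B) :
    ¬ ClX (⋃₀ (Zset '' B)) := by
  classical
  rintro ⟨g, h1, h2⟩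
  obtain ⟨b0, hb0⟩ : B.Nonempty := by
    rcases Set.eq_empty_or_nonempty B with h | h
    · exact absurd ⟨0, fun f hf => by simp [h] at hf⟩ hB
    · exact h
  have hmem : ∀ b ∈ B, ∀ f : ℕ → ℕ, (∀ n, f n ≤ env b n) → f ∈ ⋃₀ (Zset '' B) :=
    fun b hb f hf => ⟨Zset b, ⟨b, hb, rfl⟩, hf⟩
  have hS : {n | 0 < g n}.Infinite := by
    have := h1 (fun _ => 0) (hmem b0 hb0 _ (fun n => Nat.zero_le _))
    simpa using this
  -- for every b ∈ B, the set {n | 0 < g n ∧ g n ≤ env b n} is finite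
  have hA : ∀ b ∈ B, {n | 0 < g n ∧ g n ≤ env b n}.Finite := by
    intro b hb
    by_contra hinf
    obtain ⟨A1, A2, hs1, hs2, hi1, hi2, hd⟩ := split_infinite hinf
    set f : ℕ → ℕ := fun n => if n ∈ A1 then env b n else 0 with hfdef
    set h : ℕ → ℕ := fun n => if n ∈ A2 then env b n else 0 with hhdef
    have hfX : f ∈ ⋃₀ (Zset '' B) :=
      hmem b hb f (fun n => by by_cases hn : n ∈ A1 <;> simp [hfdef, hn])
    have hhX : h ∈ ⋃₀ (Zset '' B) :=
      hmem b hb h (fun n => by by_cases hn : n ∈ A2 <;> simp [hhdef, hn])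
    have hsub2 : A2 ⊆ {n | f n < g n ∧ g n ≤ h n} := by
      intro n hn
      have hnA := hs2 hn
      have hn1 : n ∉ A1 := fun h1 => (Set.disjoint_left.1 hd h1) hn
      constructor
      · simpa [hfdef, hn1] using hnA.1
      · simpa [hhdef, hn] using hnA.2
    have hsub1 : A1 ⊆ {n | h n < g n ∧ g n ≤ f n} := by
      intro n hn
      have hnA := hs1 hn
      have hn2 : n ∉ A2 := fun h1 => (Set.disjoint_right.1 hd h1) hn
      constructor
      · simpa [hhdef, hn2] using hnA.1
      · simpa [hfdef, hn] using hnA.2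
    rcases h2 f hfX h hhX with hc | hc
    · exact hi2 (hc.subset hsub2)
    · exact hi1 (hc.subset hsub1)
  -- build a dominating function, contradicting unboundedness of B
  have hex : ∀ n : ℕ, ∃ m, n ≤ m ∧ 0 < g m := by
    intro n
    obtain ⟨m, hm, hnm⟩ := hS.exists_gt n
    exact ⟨m, hnm.le, hm⟩
  apply hB
  refine ⟨fun n => g (Nat.find (hex n)), fun b hb => ?_⟩
  obtain ⟨N, hN⟩ := (hA b hb).bddAbove
  have hsub : {n | g (Nat.find (hex n)) < b n} ⊆ {n | n ≤ N} := by
    intro n hn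
    by_contra hgt
    simp only [Set.mem_setOf_eq, not_le] at hgt
    obtain ⟨hnm, hgm⟩ := Nat.find_spec (hex n)
    set m := Nat.find (hex n)
    have hmA : m ∉ {n | 0 < g n ∧ g n ≤ env b n} := by
      intro hmem'
      have := hN hmem'
      omega
    have henv : env b m < g m := by
      by_contra hle
      exact hmA ⟨hgm, not_lt.1 hle⟩
    have hb' : b n ≤ env b m := (le_env b n).trans (env_mono b hnm)
    have : g m < b n := hn
    omega
  exact (Set.finite_le_nat N).subset hsub

private lemma unbounded_univ : UnboundedFam (Set.univ : Set (ℕ → ℕ)) := by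
  rintro ⟨g, hg⟩
  have hfin := hg (fun n => g n + 1) (Set.mem_univ _)
  have : {n | g n < (fun n => g n + 1) n} = Set.univ := by
    ext n; simp
  rw [LeStar, this] at hfin
  exact Set.infinite_univ hfin

private lemma env_eq_of_Zset_eq {b b' : ℕ → ℕ} (h : Zset b = Zset b') :
    env b = env b' := by
  have h1 : env b ∈ Zset b := fun n => le_rfl
  have h2 : env b' ∈ Zset b' := fun n => le_rfl
  rw [h] at h1
  rw [← h] at h2
  exact funext fun n => le_antisymm (h1 n) (h2 n)

theorem stmt12 :
    addNum ClB ClX ≤ bNum ∧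
    ∃ Fam : Set (Set (ℕ → ℕ)), #Fam = bNum ∧ (∀ Y ∈ Fam, ClB Y) ∧ ¬ ClX (⋃₀ Fam) := by
  classical
  have hmemb : bNum ∈ {c | ∃ B, UnboundedFam B ∧ c = #B} :=
    csInf_mem ⟨#(Set.univ : Set (ℕ → ℕ)), Set.univ, unbounded_univ, rfl⟩
  obtain ⟨B, hBu, hBc⟩ := hmemb
  set Fam : Set (Set (ℕ → ℕ)) := Zset '' B with hFam
  have hClB : ∀ Y ∈ Fam, ClB Y := by
    rintro Y ⟨b, hb, rfl⟩
    refine ⟨env b, fun f hf => ?_⟩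
    have : {n | env b n < f n} = ∅ := by
      apply Set.eq_empty_iff_forall_notMem.2
      intro n hn
      exact absurd (hf n) (not_le.2 hn)
    rw [LeStar, this]
    exact Set.finite_empty
  have hnotX : ¬ ClX (⋃₀ Fam) := key hBu
  have hle : #Fam ≤ bNum := hBc ▸ Cardinal.mk_image_le
  have hunb' : UnboundedFam (env '' B) := by
    rintro ⟨h, hh⟩
    apply hBu
    refine ⟨h, fun b hb => ?_⟩
    have hfin := hh (env b) ⟨b, hb, rfl⟩
    exact hfin.subset fun n hn => lt_of_lt_of_le hn (le_env b n)
  have hge : bNum ≤ #Fam := by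
    have h1 : bNum ≤ #(env '' B) := csInf_le' ⟨env '' B, hunb', rfl⟩
    have h2 : #(env '' B) ≤ #Fam := by
      have hch : ∀ Y ∈ Fam, ∃ b ∈ B, Zset b = Y := fun Y hY => hY
      choose φ hφB hφZ using hch
      have hsurj : Function.Surjective
          (fun Y : Fam => (⟨env (φ Y.1 Y.2), φ Y.1 Y.2, hφB Y.1 Y.2, rfl⟩ :
            (env '' B : Set (ℕ → ℕ)))) := by
        rintro ⟨y, b, hb, rfl⟩
        have hYm : Zset b ∈ Fam := ⟨b, hb, rfl⟩
        refine ⟨⟨Zset b, hYm⟩, ?_⟩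
        exact Subtype.ext (env_eq_of_Zset_eq (hφZ (Zset b) hYm))
      exact Cardinal.mk_le_of_surjective hsurj
    exact h1.trans h2
  have heq : #Fam = bNum := le_antisymm hle hge
  constructor
  · have : addNum ClB ClX ≤ #Fam := csInf_le' ⟨Fam, hClB, hnotX, rfl⟩
    exact this.trans_eq heq
  · exact ⟨Fam, heq, hClB, hnotX⟩
end

section
/- For every nonprincipal ultrafilter U on ℕ, add(𝔇fin, 𝔇) ≤ cof(ℕ^ℕ/U), the minimal size of a subset of ℕ^ℕ cofinal with respect to the ultrafilter quasiorder ≤_U. -/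
open Cardinal Set

theorem stmt14 (U : Ultrafilter ℕ) (hU : NonPrincipal U) :
    addNum ClDfin ClD ≤ cofRP U := by
  have hne : {c | ∃ C : Set (ℕ → ℕ), (∀ f : ℕ → ℕ, ∃ g ∈ C, {n | f n ≤ g n} ∈ U) ∧ c = #C}.Nonempty := by
    refine ⟨#(Set.univ : Set (ℕ → ℕ)), Set.univ, fun f => ⟨f, trivial, ?_⟩, rfl⟩
    simp only [le_refl, Set.setOf_true]
    exact Filter.univ_mem
  obtain ⟨C, hC, hc⟩ := csInf_mem hne
  set Y : (ℕ → ℕ) → Set (ℕ → ℕ) := fun g => {f | {n | f n ≤ g n} ∈ U} with hY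
  have key : addNum ClDfin ClD ≤ #(Y '' C) := by
    apply csInf_le'
    refine ⟨Y '' C, ?_, ?_, rfl⟩
    · rintro Z ⟨g, -, rfl⟩
      intro hdom
      obtain ⟨F, hF, hle⟩ := hdom (fun n => g n + 1)
      have hmem : {n | (F.sup fun h => h n) ≤ g n} ∈ U := by
        have : {n | (F.sup fun h => h n) ≤ g n} = ⋂ p ∈ (F : Set (ℕ → ℕ)), {n | p n ≤ g n} := by
          ext n; simp [Finset.sup_le_iff]
        rw [this]
        exact (Filter.biInter_mem F.finite_toSet).mpr (fun p hp => hF hp)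
      have hinf := hU _ hmem
      have : {n | (F.sup fun h => h n) < g n + 1} = {n | (F.sup fun h => h n) ≤ g n} := by
        ext n; simp [Nat.lt_succ_iff]
      rw [LeStar] at hle
      apply hinf
      have : {n | (F.sup fun h => h n) ≤ g n} ⊆ {n | (F.sup fun h => h n) < g n + 1} := by
        intro n hn; exact Nat.lt_succ_of_le hn
      exact (hle.subset (by intro n hn; exact this hn))
    · intro hnd
      apply hnd
      intro f
      obtain ⟨g, hg, hfg⟩ := hC f
      refine ⟨f, ⟨Y g, ⟨g, hg, rfl⟩, hfg⟩, ?_⟩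
      simp [LeStar]
  calc addNum ClDfin ClD ≤ #(Y '' C) := key
    _ ≤ #C := Cardinal.mk_image_le
    _ = cofRP U := hc.symm
end

section
/- If U is a simple P_κ point (a nonprincipal ultrafilter generated by a ⊆*-decreasing κ-sequence of infinite subsets of ℕ), then add(𝔛, 𝔇) ≤ cof(ℕ^ℕ/U). -/
open Cardinal Set

/-- `U` is a simple P_κ point: generated by a ⊆*-decreasing κ-sequence of infinite sets. -/
def SimplePPoint (κ : Cardinal) (U : Ultrafilter ℕ) : Prop :=
  ∃ A : κ.ord.ToType → Set ℕ,
    (∀ i, (A i).Infinite) ∧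
    (∀ i j, i < j → ASub (A j) (A i)) ∧
    (∀ S : Set ℕ, S ∈ U ↔ ∃ i, ASub (A i) S)


noncomputable def nxt (A : Set ℕ) (n : ℕ) : ℕ := sInf {a | a ∈ A ∧ n < a}

noncomputable def Gm (g : ℕ → ℕ) (n : ℕ) : ℕ := n + 1 + ∑ m ∈ Finset.range (n + 1), g m

lemma Gm_strictMono (g : ℕ → ℕ) : StrictMono (Gm g) := by
  apply strictMono_nat_of_lt_succ
  intro n
  have h : ∑ m ∈ Finset.range (n + 1), g m ≤ ∑ m ∈ Finset.range (n + 1 + 1), g m :=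
    Finset.sum_le_sum_of_subset (Finset.range_subset_range.mpr (by omega))
  simp only [Gm]; omega

lemma le_Gm (g : ℕ → ℕ) (n : ℕ) : g n ≤ Gm g n := by
  have := Finset.single_le_sum (f := g) (fun i _ => Nat.zero_le (g i))
    (Finset.self_mem_range_succ n)
  simp only [Gm]; omega

lemma lt_Gm (g : ℕ → ℕ) (n : ℕ) : n < Gm g n := by simp only [Gm]; omega

lemma nxt_spec {A : Set ℕ} (hA : A.Infinite) (n : ℕ) : nxt A n ∈ A ∧ n < nxt A n := by
  have hne : {a | a ∈ A ∧ n < a}.Nonempty := by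
    rcases Set.eq_empty_or_nonempty {a | a ∈ A ∧ n < a} with he | hs
    · exfalso
      apply hA
      apply Set.Finite.subset (Set.finite_Iic n)
      intro a ha
      simp only [Set.mem_Iic]
      by_contra hlt
      push_neg at hlt
      have : a ∈ ({a | a ∈ A ∧ n < a} : Set ℕ) := ⟨ha, hlt⟩
      rw [he] at this
      exact this
    · exact hs
  exact Nat.sInf_mem hne

lemma nxt_le {A : Set ℕ} {n a : ℕ} (ha : a ∈ A) (h : n < a) : nxt A n ≤ a :=
  Nat.sInf_le ⟨ha, h⟩

theorem stmt17 (κ : Cardinal) (U : Ultrafilter ℕ) (hU : NonPrincipal U)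
    (h : SimplePPoint κ U) :
    addNum ClX ClD ≤ cofRP U := by
  classical
  obtain ⟨A, hAinf, hAdec, hAgen⟩ := h
  have hmem : cofRP U ∈ {c | ∃ C : Set (ℕ → ℕ),
      (∀ f : ℕ → ℕ, ∃ g ∈ C, {n | f n ≤ g n} ∈ U) ∧ c = #C} := by
    apply csInf_mem
    refine ⟨#(Set.univ : Set (ℕ → ℕ)), Set.univ, fun f => ⟨f, Set.mem_univ f, ?_⟩, rfl⟩
    have he : {n | f n ≤ f n} = Set.univ := by simp
    rw [he]
    exact Filter.univ_mem
  obtain ⟨C, hC, hCeq⟩ := hmem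
  set Fam : Set (Set (ℕ → ℕ)) :=
    (fun g => Set.range fun i => Gm g ∘ nxt (A i)) '' C with hFam
  have key : ∀ i j, (A j \ A i).Finite ∨ (A i \ A j).Finite := by
    intro i j
    rcases lt_trichotomy i j with hij | rfl | hij
    · exact Or.inl (hAdec i j hij)
    · exact Or.inl (by simp)
    · exact Or.inr (hAdec j i hij)
  have middle : ∀ (g : ℕ → ℕ) (i j : κ.ord.ToType), (A j \ A i).Finite →
      {n | (Gm g ∘ nxt (A j)) n < Gm g (Gm g (n + 1)) ∧
        Gm g (Gm g (n + 1)) ≤ (Gm g ∘ nxt (A i)) n}.Finite := by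
    intro g i j hsub
    obtain ⟨b, hb⟩ := hsub.bddAbove
    apply Set.Finite.subset (Set.finite_Iic b)
    rintro n ⟨h1, h2⟩
    obtain ⟨haj, hna⟩ := nxt_spec (hAinf j) n
    have h1' : nxt (A j) n < Gm g (n + 1) := (Gm_strictMono g).lt_iff_lt.mp h1
    have h2' : Gm g (n + 1) ≤ nxt (A i) n := (Gm_strictMono g).le_iff_le.mp h2
    have hni : nxt (A j) n ∉ A i := by
      intro hmemi
      have := nxt_le hmemi hna
      omega
    have hble : nxt (A j) n ≤ b := hb ⟨haj, hni⟩
    simp only [Set.mem_Iic]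
    omega
  have hX : ∀ Y ∈ Fam, ClX Y := by
    rintro Y ⟨g, hgC, rfl⟩
    refine ⟨fun n => Gm g (Gm g (n + 1)), ?_, ?_⟩
    · rintro f ⟨i, rfl⟩
      have himg : ((fun a => a - 1) '' (A i \ {0})).Infinite := by
        apply Set.Infinite.image
        · intro a ha b hb hab
          simp only [Set.mem_diff, Set.mem_singleton_iff] at ha hb
          simp only at hab
          omega
        · exact (hAinf i).diff (Set.finite_singleton 0)
      apply himg.mono
      rintro n ⟨a, ⟨haA, ha0⟩, rfl⟩
      simp only [Set.mem_singleton_iff] at ha0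
      simp only [Set.mem_setOf_eq, Function.comp_apply]
      have h1 : nxt (A i) (a - 1) ≤ a := nxt_le haA (by omega)
      calc Gm g (nxt (A i) (a - 1)) ≤ Gm g (a - 1 + 1) :=
            (Gm_strictMono g).monotone (by omega)
        _ < Gm g (Gm g (a - 1 + 1)) := (Gm_strictMono g) (lt_Gm g _)
    · rintro f ⟨i, rfl⟩ f' ⟨j, rfl⟩
      rcases key i j with hf | hf
      · exact Or.inr (middle g i j hf)
      · exact Or.inl (middle g j i hf)
  have hdom : DominatingFam (⋃₀ Fam) := by
    intro f
    set fh : ℕ → ℕ := fun n => ∑ m ∈ Finset.range (n + 1), f m with hfh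
    have hfhmono : Monotone fh := by
      intro x y hxy
      exact Finset.sum_le_sum_of_subset (Finset.range_subset_range.mpr (by omega))
    have hffh : ∀ n, f n ≤ fh n := fun n =>
      Finset.single_le_sum (fun i _ => Nat.zero_le (f i)) (Finset.self_mem_range_succ n)
    obtain ⟨g, hgC, hgU⟩ := hC fh
    obtain ⟨i, hi⟩ := (hAgen _).mp hgU
    obtain ⟨b, hb⟩ := hi.bddAbove
    refine ⟨Gm g ∘ nxt (A i), ⟨_, ⟨g, hgC, rfl⟩, ⟨i, rfl⟩⟩, ?_⟩
    apply Set.Finite.subset (Set.finite_Iic b)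
    intro n hn
    simp only [Set.mem_setOf_eq, Function.comp_apply] at hn
    simp only [Set.mem_Iic]
    by_contra hnb
    push_neg at hnb
    obtain ⟨haA, hna⟩ := nxt_spec (hAinf i) n
    have hnotdiff : nxt (A i) n ∉ A i \ {n | fh n ≤ g n} := by
      intro hd
      have := hb hd
      omega
    have hmem2 : fh (nxt (A i) n) ≤ g (nxt (A i) n) := by
      by_contra hx
      exact hnotdiff ⟨haA, hx⟩
    have hchain : f n ≤ Gm g (nxt (A i) n) :=
      le_trans (hffh n) (le_trans (hfhmono (le_of_lt hna))
        (le_trans hmem2 (le_Gm g _)))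
    omega
  have h1 : addNum ClX ClD ≤ #Fam :=
    csInf_le' ⟨Fam, hX, fun hcl => hcl hdom, rfl⟩
  have h2 : (#Fam : Cardinal) ≤ #C := Cardinal.mk_image_le
  rw [hCeq]
  exact h1.trans h2
end
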